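/- arXiv:2410.07052 — 5 statements merged into one kernel-verified Lean document; each statement's English description precedes it below -/
import Mathlib

section
/- If R' is a reduced ring, then every Jordan homomorphism φ : R → R' is the sum of a homomorphism and an antihomomorphism on the commutator ideal K of R. -/
/-- An additive map `φ` between (possibly non-unital) associative rings is a
Jordan homomorphism if `φ(x²) = φ(x)²` and `φ(xyx) = φ(x)φ(y)φ(x)`. -/
def IsJordanHom {R R' : Type*} [NonUnitalRing R] [NonUnitalRing R'] (φ : R → R') : Prop :=
  (∀ x y : R, φ (x + y) = φ x + φ y) ∧
  (∀ x : R, φ (x * x) = φ x * φ x) ∧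
  (∀ x y : R, φ (x * y * x) = φ x * φ y * φ x)

/-- `R'_φ`: the (non-unital) subring of `R'` generated by the image of `φ`. -/
def rngGen {R R' : Type*} [NonUnitalRing R] [NonUnitalRing R'] (φ : R → R') :
    NonUnitalSubring R' :=
  NonUnitalSubring.closure (Set.range φ)

/-- `V_φ`: the two-sided ideal of `R'_φ` generated by all `{x,y} = φ(xy) − φ(x)φ(y)`. -/
def Vphi {R R' : Type*} [NonUnitalRing R] [NonUnitalRing R'] (φ : R → R') :
    TwoSidedIdeal (rngGen φ) :=
  TwoSidedIdeal.span {a : rngGen φ | ∃ x y : R, (a : R') = φ (x * y) - φ x * φ y}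

/-- `W_φ`: the two-sided ideal of `R'_φ` generated by all `⟨x,y⟩ = φ(xy) − φ(y)φ(x)`. -/
def Wphi {R R' : Type*} [NonUnitalRing R] [NonUnitalRing R'] (φ : R → R') :
    TwoSidedIdeal (rngGen φ) :=
  TwoSidedIdeal.span {a : rngGen φ | ∃ x y : R, (a : R') = φ (x * y) - φ y * φ x}

/-- `φ` is splittable if `V_φ ∩ W_φ = {0}`. -/
def Splittable {R R' : Type*} [NonUnitalRing R] [NonUnitalRing R'] (φ : R → R') : Prop :=
  Vphi φ ⊓ Wphi φ = ⊥

/-- The commutator ideal of `R`: the two-sided ideal generated by all `xy − yx`. -/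
def commutatorIdeal (R : Type*) [NonUnitalRing R] : TwoSidedIdeal R :=
  TwoSidedIdeal.span {z : R | ∃ x y : R, z = x * y - y * x}

/-- `φ` is the sum of the homomorphism `φ₁` and the antihomomorphism `φ₂` on the ideal
`I` of `R`; here `φ₁, φ₂ : R → R'_φ` are only constrained on `I`. -/
def IsSumHomAntihomWith {R R' : Type*} [NonUnitalRing R] [NonUnitalRing R']
    (φ : R → R') (I : TwoSidedIdeal R) (φ₁ φ₂ : R → rngGen φ) : Prop :=
  (∀ u ∈ I, ∀ v ∈ I, φ₁ (u + v) = φ₁ u + φ₁ v) ∧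
  (∀ u ∈ I, ∀ v ∈ I, φ₂ (u + v) = φ₂ u + φ₂ v) ∧
  (∀ u ∈ I, ∀ v ∈ I, φ₁ (u * v) = φ₁ u * φ₁ v) ∧
  (∀ u ∈ I, ∀ v ∈ I, φ₂ (u * v) = φ₂ v * φ₂ u) ∧
  (∀ u ∈ I, φ u = (φ₁ u : R') + (φ₂ u : R')) ∧
  (∃ J₁ J₂ : TwoSidedIdeal (rngGen φ),
    (∀ u ∈ I, φ₁ u ∈ J₁) ∧ (∀ u ∈ I, φ₂ u ∈ J₂) ∧ J₁ ⊓ J₂ = ⊥) ∧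
  (∀ u ∈ I, ∀ x : R, (φ₁ (u * x) : R') = (φ₁ u : R') * φ x ∧
      (φ₁ (x * u) : R') = φ x * (φ₁ u : R')) ∧
  (∀ u ∈ I, ∀ x : R, (φ₂ (u * x) : R') = φ x * (φ₂ u : R') ∧
      (φ₂ (x * u) : R') = (φ₂ u : R') * φ x)

/-- `φ` is the sum of a homomorphism and an antihomomorphism on the ideal `I` of `R`. -/
def IsSumHomAntihomOn {R R' : Type*} [NonUnitalRing R] [NonUnitalRing R']
    (φ : R → R') (I : TwoSidedIdeal R) : Prop :=
  ∃ φ₁ φ₂ : R → rngGen φ, IsSumHomAntihomWith φ I φ₁ φ₂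

namespace JordanAux
variable {R R' : Type*} [NonUnitalRing R] [NonUnitalRing R']

/-- `ε(x,y) = φ(xy) − φ(x)φ(y)`. -/
def eps (φ : R → R') (x y : R) : R' := φ (x*y) - φ x * φ y
/-- `δ(x,y) = φ(xy) − φ(y)φ(x)`. -/
def del (φ : R → R') (x y : R) : R' := φ (x*y) - φ y * φ x

variable {φ : R → R'}

section identities
variable (hadd : ∀ x y : R, φ (x + y) = φ x + φ y)
variable (hsq : ∀ x : R, φ (x * x) = φ x * φ x)
variable (htri : ∀ x y : R, φ (x * y * x) = φ x * φ y * φ x)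

include hadd htri in
lemma E2 (x y z : R) : φ (x*y*z) + φ (z*y*x) = φ x * φ y * φ z + φ z * φ y * φ x := by
  have h := htri (x + z) y
  have hx : (x+z)*y*(x+z) = x*y*x + (x*y*z + z*y*x) + z*y*z := by noncomm_ring
  rw [hx, hadd, hadd, hadd, htri, htri, hadd x z] at h
  have h2 : (φ x + φ z) * φ y * (φ x + φ z)
      = φ x * φ y * φ x + (φ x * φ y * φ z + φ z * φ y * φ x) + φ z * φ y * φ z := by
    noncomm_ring
  rw [h2] at h
  exact add_left_cancel (add_right_cancel h)

include hadd hsq htri in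
lemma eps_del (x y : R) : eps φ x y * del φ x y = 0 := by
  have h := E2 hadd htri x y (x*y)
  have h1 : x*y*(x*y) = (x*y)*(x*y) := by noncomm_ring
  have h2 : (x*y)*y*x = x*(y*y)*x := by noncomm_ring
  rw [h1, h2, hsq, htri, hsq] at h
  have expand : eps φ x y * del φ x y
      = (φ (x*y) * φ (x*y) + φ x * (φ y * φ y) * φ x)
        - (φ x * φ y * φ (x*y) + φ (x*y) * φ y * φ x) := by
    unfold eps del; noncomm_ring
  rw [expand, h, sub_self]

include hadd hsq htri in
lemma del_eps (x y : R) : del φ x y * eps φ x y = 0 := by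
  have h := E2 hadd htri (x*y) x y
  have h1 : (x*y)*x*y = (x*y)*(x*y) := by noncomm_ring
  have h2 : y*x*(x*y) = y*(x*x)*y := by noncomm_ring
  rw [h1, h2, hsq, htri, hsq] at h
  have expand : del φ x y * eps φ x y
      = (φ (x*y) * φ (x*y) + φ y * (φ x * φ x) * φ y)
        - (φ (x*y) * φ x * φ y + φ y * φ x * φ (x*y)) := by
    unfold eps del; noncomm_ring
  rw [expand, h, sub_self]

include hadd in
lemma eps_add_left (x u y : R) : eps φ (x+u) y = eps φ x y + eps φ u y := by
  unfold eps; rw [add_mul, hadd, hadd]; noncomm_ring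

include hadd in
lemma del_add_left (x u y : R) : del φ (x+u) y = del φ x y + del φ u y := by
  unfold del; rw [add_mul, hadd, hadd]; noncomm_ring

include hadd in
lemma eps_add_right (x y v : R) : eps φ x (y+v) = eps φ x y + eps φ x v := by
  unfold eps; rw [mul_add, hadd, hadd]; noncomm_ring

include hadd in
lemma del_add_right (x y v : R) : del φ x (y+v) = del φ x y + del φ x v := by
  unfold del; rw [mul_add, hadd, hadd]; noncomm_ring

variable (hred : ∀ a : R', a * a = 0 → a = 0)

include hred in
lemma swap0 {p q : R'} (h : p * q = 0) : q * p = 0 := by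
  apply hred
  have : q * p * (q * p) = q * (p * q) * p := by noncomm_ring
  rw [this, h]; simp

include hred in
lemma mid0 {p q : R'} (h : p * q = 0) (r : R') : p * r * q = 0 := by
  apply hred
  have hqp := swap0 hred h
  have : p * r * q * (p * r * q) = p * r * (q * p) * r * q := by noncomm_ring
  rw [this, hqp]; simp

include hred hadd hsq htri in
lemma mixed1 (x u y : R) : eps φ x y * del φ u y = 0 := by
  have lin : eps φ x y * del φ u y + eps φ u y * del φ x y = 0 := by
    have l := eps_del hadd hsq htri (x+u) y
    rw [eps_add_left hadd, del_add_left hadd] at l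
    have e : (eps φ x y + eps φ u y) * (del φ x y + del φ u y)
        = eps φ x y * del φ x y + eps φ u y * del φ u y
          + (eps φ x y * del φ u y + eps φ u y * del φ x y) := by noncomm_ring
    rw [e, eps_del hadd hsq htri, eps_del hadd hsq htri, zero_add, zero_add] at l
    exact l
  have hp : eps φ x y * del φ u y = -(eps φ u y * del φ x y) :=
    eq_neg_of_add_eq_zero_left lin
  apply hred
  calc eps φ x y * del φ u y * (eps φ x y * del φ u y)
      = eps φ x y * del φ u y * (-(eps φ u y * del φ x y)) := by nth_rewrite 2 [hp]; rfl
    _ = -(eps φ x y * (del φ u y * eps φ u y) * del φ x y) := by noncomm_ring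
    _ = 0 := by rw [del_eps hadd hsq htri]; simp

include hred hadd hsq htri in
lemma mixed (x y u v : R) : eps φ x y * del φ u v = 0 := by
  have lin : eps φ x y * del φ u v + eps φ x v * del φ u y = 0 := by
    have l := mixed1 hadd hsq htri hred x u (y + v)
    rw [eps_add_right hadd, del_add_right hadd] at l
    have e : (eps φ x y + eps φ x v) * (del φ u y + del φ u v)
        = eps φ x y * del φ u y + eps φ x v * del φ u v
          + (eps φ x y * del φ u v + eps φ x v * del φ u y) := by noncomm_ring
    rw [e, mixed1 hadd hsq htri hred, mixed1 hadd hsq htri hred,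
      zero_add, zero_add] at l
    exact l
  have hp : eps φ x y * del φ u v = -(eps φ x v * del φ u y) :=
    eq_neg_of_add_eq_zero_left lin
  have hdv : del φ u v * eps φ x v = 0 := swap0 hred (mixed1 hadd hsq htri hred x u v)
  apply hred
  calc eps φ x y * del φ u v * (eps φ x y * del φ u v)
      = eps φ x y * del φ u v * (-(eps φ x v * del φ u y)) := by nth_rewrite 2 [hp]; rfl
    _ = -(eps φ x y * (del φ u v * eps φ x v) * del φ u y) := by noncomm_ring
    _ = 0 := by rw [hdv]; simp

end identities

/-- the canonical map `R → R'_φ`. -/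
def Phi (φ : R → R') (x : R) : rngGen φ :=
  ⟨φ x, NonUnitalSubring.subset_closure ⟨x, rfl⟩⟩

@[simp] lemma coe_Phi (φ : R → R') (x : R) : ((Phi φ x : rngGen φ) : R') = φ x := rfl

lemma memV (φ : R → R') (x y : R) :
    Phi φ (x*y) - Phi φ x * Phi φ y ∈ Vphi φ :=
  TwoSidedIdeal.subset_span
    (show _ ∈ {a : rngGen φ | ∃ x y : R, (a : R') = φ (x * y) - φ x * φ y} from
      ⟨x, y, by push_cast; rfl⟩)

lemma memW (φ : R → R') (x y : R) :
    Phi φ (x*y) - Phi φ y * Phi φ x ∈ Wphi φ :=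
  TwoSidedIdeal.subset_span
    (show _ ∈ {a : rngGen φ | ∃ x y : R, (a : R') = φ (x * y) - φ y * φ x} from
      ⟨x, y, by push_cast; rfl⟩)

section ortho
variable (hred : ∀ a : R', a * a = 0 → a = 0)
variable (hadd : ∀ x y : R, φ (x + y) = φ x + φ y)
variable (hsq : ∀ x : R, φ (x * x) = φ x * φ x)
variable (htri : ∀ x y : R, φ (x * y * x) = φ x * φ y * φ x)

include hred hadd hsq htri in
/-- The key orthogonality: `V_φ · W_φ = 0`. -/
lemma VW_mul_eq_zero : ∀ v ∈ Vphi φ, ∀ w ∈ Wphi φ, v * w = 0 := by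
  -- Step 1: generators of V annihilate all of W
  have gen1 : ∀ a : rngGen φ, (∃ x y : R, (a : R') = φ (x * y) - φ x * φ y) →
      ∀ w ∈ Wphi φ, a * w = 0 := by
    rintro a ⟨x, y, hxy⟩ w hw
    have hxy' : (a : R') = eps φ x y := hxy
    let T : TwoSidedIdeal (rngGen φ) := TwoSidedIdeal.mk'
      {w : rngGen φ | (a : R') * (w : R') = 0 ∧ ∀ c : R', (a : R') * c * (w : R') = 0}
      ⟨by simp, fun c => by simp⟩
      (fun {p q} hp hq => ⟨by push_cast; rw [mul_add, hp.1, hq.1, add_zero],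
        fun c => by
          push_cast
          rw [mul_add, hp.2 c, hq.2 c, add_zero]⟩)
      (fun {p} hp => ⟨by push_cast; rw [mul_neg, hp.1, neg_zero],
        fun c => by push_cast; rw [mul_neg, hp.2 c, neg_zero]⟩)
      (fun {x' p} hp => ⟨by
          push_cast
          rw [show (a:R') * ((x':R') * (p:R')) = (a:R') * (x':R') * (p:R') by noncomm_ring,
            hp.2 _],
        fun c => by
          push_cast
          rw [show (a:R') * c * ((x':R') * (p:R')) = (a:R') * (c * (x':R')) * (p:R')
            by noncomm_ring, hp.2 _]⟩)
      (fun {p x'} hp => ⟨by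
          push_cast
          rw [show (a:R') * ((p:R') * (x':R')) = ((a:R') * (p:R')) * (x':R')
            by noncomm_ring, hp.1, zero_mul],
        fun c => by
          push_cast
          rw [show (a:R') * c * ((p:R') * (x':R')) = ((a:R') * c * (p:R')) * (x':R')
            by noncomm_ring, hp.2 _, zero_mul]⟩)
    have hWT : w ∈ T := by
      refine TwoSidedIdeal.mem_span_iff.mp hw T ?_
      rintro b ⟨u, v, hb⟩
      have hb' : (b : R') = del φ u v := hb
      refine (TwoSidedIdeal.mem_mk' _ _ _ _ _ _ _).mpr ⟨?_, ?_⟩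
      · rw [hxy', hb']; exact mixed hadd hsq htri hred x y u v
      · intro c
        rw [hxy', hb']
        exact mid0 hred (mixed hadd hsq htri hred x y u v) c
    have h1 : (a : R') * (w : R') = 0 :=
      ((TwoSidedIdeal.mem_mk' _ _ _ _ _ _ _).mp hWT).1
    have : ((a * w : rngGen φ) : R') = ((0 : rngGen φ) : R') := by push_cast; exact h1
    exact Subtype.coe_injective this
  -- Step 2: all of V annihilates all of W
  intro v hv
  let T2 : TwoSidedIdeal (rngGen φ) := TwoSidedIdeal.mk'
    {v : rngGen φ | ∀ w ∈ Wphi φ, v * w = 0}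
    (fun w _ => by rw [zero_mul])
    (fun {p q} hp hq w hw => by rw [add_mul, hp w hw, hq w hw, add_zero])
    (fun {p} hp w hw => by rw [neg_mul, hp w hw, neg_zero])
    (fun {x' p} hp w hw => by rw [mul_assoc, hp w hw, mul_zero])
    (fun {p x'} hp w hw => by
      rw [mul_assoc]
      exact hp _ ((Wphi φ).mul_mem_left x' w hw))
  have hvT : v ∈ T2 := by
    refine TwoSidedIdeal.mem_span_iff.mp hv T2 ?_
    rintro b hb
    exact (TwoSidedIdeal.mem_mk' _ _ _ _ _ _ _).mpr (gen1 b hb)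
  exact (TwoSidedIdeal.mem_mk' _ _ _ _ _ _ _).mp hvT

end ortho
end JordanAux

/-- If `R'` is a reduced ring (no nonzero nilpotents; for associative rings this is
equivalent to: `x² = 0` implies `x = 0`), then every Jordan homomorphism
`φ : R → R'` is the sum of a homomorphism and an antihomomorphism on the commutator
ideal `K` of `R`. -/
theorem jordanHom_sum_on_commutatorIdeal_of_reduced
    {R R' : Type*} [NonUnitalRing R] [NonUnitalRing R']
    (hred : ∀ a : R', a * a = 0 → a = 0)
    (φ : R → R') (hφ : IsJordanHom φ) :
    IsSumHomAntihomOn φ (commutatorIdeal R) := by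
  classical
  obtain ⟨hadd, hsq, htri⟩ := hφ
  have VW := JordanAux.VW_mul_eq_zero (φ := φ) hred hadd hsq htri
  -- basic additive facts
  have hzero : φ 0 = 0 := by
    have := hadd 0 0
    rw [add_zero] at this
    exact add_eq_left.mp this.symm
  have hneg : ∀ x : R, φ (-x) = -φ x := by
    intro x
    have := hadd x (-x)
    rw [add_neg_cancel, hzero] at this
    exact (eq_neg_of_add_eq_zero_right this.symm)
  have Phi_add : ∀ x y : R, JordanAux.Phi φ (x + y) = JordanAux.Phi φ x + JordanAux.Phi φ y :=
    fun x y => Subtype.coe_injective (by push_cast; exact hadd x y)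
  have Phi_zero : JordanAux.Phi φ 0 = 0 :=
    Subtype.coe_injective (by push_cast; exact hzero)
  have Phi_neg : ∀ x : R, JordanAux.Phi φ (-x) = -JordanAux.Phi φ x :=
    fun x => Subtype.coe_injective (by push_cast; exact hneg x)
  have Phi_sub : ∀ x y : R, JordanAux.Phi φ (x - y) = JordanAux.Phi φ x - JordanAux.Phi φ y := by
    intro x y
    rw [sub_eq_add_neg, Phi_add, Phi_neg, sub_eq_add_neg]
  -- uniqueness of decompositions
  have uniq : ∀ v w v' w' : rngGen φ, v ∈ Vphi φ → w ∈ Wphi φ → v' ∈ Vphi φ → w' ∈ Wphi φ →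
      v + w = v' + w' → v = v' ∧ w = w' := by
    intro v w v' w' hv hw hv' hw' he
    have hd : v - v' = w' - w := by
      have := he
      rw [← sub_eq_zero] at this ⊢
      rw [← this]; abel_nf
    have hdV : v - v' ∈ Vphi φ := (Vphi φ).sub_mem hv hv'
    have hdW : v - v' ∈ Wphi φ := hd ▸ (Wphi φ).sub_mem hw' hw
    have h0 : (v - v') * (v - v') = 0 := VW _ hdV _ hdW
    have h0' : ((v - v' : rngGen φ) : R') * ((v - v' : rngGen φ) : R') = 0 := by
      have := congrArg (fun z : rngGen φ => (z : R')) h0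
      push_cast at this
      push_cast
      exact this
    have : v - v' = 0 := Subtype.coe_injective (hred _ h0')
    have hvv : v = v' := by rwa [sub_eq_zero] at this
    refine ⟨hvv, ?_⟩
    have : w' - w = 0 := by rw [← hd, this]
    rw [sub_eq_zero] at this
    exact this.symm
  -- every element of K has a decomposition
  have hKdec : ∀ u ∈ commutatorIdeal R,
      ∃ v ∈ Vphi φ, ∃ w ∈ Wphi φ, JordanAux.Phi φ u = v + w := by
    intro u hu
    let M : TwoSidedIdeal R := TwoSidedIdeal.mk'
      {u : R | ∃ v ∈ Vphi φ, ∃ w ∈ Wphi φ, JordanAux.Phi φ u = v + w}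
      ⟨0, (Vphi φ).zero_mem, 0, (Wphi φ).zero_mem, by rw [Phi_zero, add_zero]⟩
      (fun {p q} hp hq => by
        obtain ⟨v, hv, w, hw, he⟩ := hp
        obtain ⟨v', hv', w', hw', he'⟩ := hq
        exact ⟨v + v', (Vphi φ).add_mem hv hv', w + w', (Wphi φ).add_mem hw hw',
          by rw [Phi_add, he, he']; abel⟩)
      (fun {p} hp => by
        obtain ⟨v, hv, w, hw, he⟩ := hp
        exact ⟨-v, (Vphi φ).neg_mem hv, -w, (Wphi φ).neg_mem hw,
          by rw [Phi_neg, he]; abel⟩)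
      (fun {x p} hp => by
        obtain ⟨v, hv, w, hw, he⟩ := hp
        refine ⟨(JordanAux.Phi φ (x*p) - JordanAux.Phi φ x * JordanAux.Phi φ p)
            + JordanAux.Phi φ x * v,
          (Vphi φ).add_mem (JordanAux.memV φ x p) ((Vphi φ).mul_mem_left _ _ hv),
          JordanAux.Phi φ x * w, (Wphi φ).mul_mem_left _ _ hw, ?_⟩
        rw [he]; noncomm_ring)
      (fun {p x} hp => by
        obtain ⟨v, hv, w, hw, he⟩ := hp
        refine ⟨(JordanAux.Phi φ (p*x) - JordanAux.Phi φ p * JordanAux.Phi φ x)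
            + v * JordanAux.Phi φ x,
          (Vphi φ).add_mem (JordanAux.memV φ p x) ((Vphi φ).mul_mem_right _ _ hv),
          w * JordanAux.Phi φ x, (Wphi φ).mul_mem_right _ _ hw, ?_⟩
        rw [he]; noncomm_ring)
    have hu' : u ∈ M := by
      refine TwoSidedIdeal.mem_span_iff.mp hu M ?_
      rintro z ⟨x, y, rfl⟩
      refine (TwoSidedIdeal.mem_mk' _ _ _ _ _ _ _).mpr
        ⟨JordanAux.Phi φ (x*y) - JordanAux.Phi φ x * JordanAux.Phi φ y, JordanAux.memV φ x y,
         -(JordanAux.Phi φ (y*x) - JordanAux.Phi φ x * JordanAux.Phi φ y),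
         (Wphi φ).neg_mem (JordanAux.memW φ y x), ?_⟩
      rw [Phi_sub]; abel
    rwa [TwoSidedIdeal.mem_mk'] at hu'
  -- choose the components
  have hex : ∀ u : R, ∃ v w : rngGen φ, u ∈ commutatorIdeal R →
      v ∈ Vphi φ ∧ w ∈ Wphi φ ∧ JordanAux.Phi φ u = v + w := by
    intro u
    by_cases h : u ∈ commutatorIdeal R
    · obtain ⟨v, hv, w, hw, he⟩ := hKdec u h
      exact ⟨v, w, fun _ => ⟨hv, hw, he⟩⟩
    · exact ⟨0, 0, fun h' => absurd h' h⟩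
  choose f2 f1 hspec using hex
  -- characterization of the components
  have char : ∀ u ∈ commutatorIdeal R, ∀ v w : rngGen φ, v ∈ Vphi φ → w ∈ Wphi φ →
      JordanAux.Phi φ u = v + w → f2 u = v ∧ f1 u = w := by
    intro u hu v w hv hw he
    obtain ⟨hv0, hw0, he0⟩ := hspec u hu
    exact uniq _ _ _ _ hv0 hw0 hv hw (he0.symm.trans he)
  refine ⟨f1, f2, ?_, ?_, ?_, ?_, ?_, ?_, ?_, ?_⟩
  · -- f1 additive
    intro u hu v hv
    obtain ⟨h2u, h1u, heu⟩ := hspec u hu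
    obtain ⟨h2v, h1v, hev⟩ := hspec v hv
    exact (char (u + v) ((commutatorIdeal R).add_mem hu hv) (f2 u + f2 v) (f1 u + f1 v)
      ((Vphi φ).add_mem h2u h2v) ((Wphi φ).add_mem h1u h1v)
      (by rw [Phi_add, heu, hev]; abel)).2
  · -- f2 additive
    intro u hu v hv
    obtain ⟨h2u, h1u, heu⟩ := hspec u hu
    obtain ⟨h2v, h1v, hev⟩ := hspec v hv
    exact (char (u + v) ((commutatorIdeal R).add_mem hu hv) (f2 u + f2 v) (f1 u + f1 v)
      ((Vphi φ).add_mem h2u h2v) ((Wphi φ).add_mem h1u h1v)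
      (by rw [Phi_add, heu, hev]; abel)).1
  · -- f1 multiplicative
    intro u hu v hv
    obtain ⟨h2u, h1u, heu⟩ := hspec u hu
    obtain ⟨h2v, h1v, hev⟩ := hspec v hv
    refine (char (u * v) ((commutatorIdeal R).mul_mem_right u v hu)
      ((JordanAux.Phi φ (u*v) - JordanAux.Phi φ u * JordanAux.Phi φ v)
        + f2 u * f2 v + f2 u * f1 v + f1 u * f2 v)
      (f1 u * f1 v) ?_ ((Wphi φ).mul_mem_left _ _ h1v) ?_).2
    · exact (Vphi φ).add_mem ((Vphi φ).add_mem ((Vphi φ).add_mem (JordanAux.memV φ u v)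
        ((Vphi φ).mul_mem_right _ _ h2u)) ((Vphi φ).mul_mem_right _ _ h2u))
        ((Vphi φ).mul_mem_left _ _ h2v)
    · rw [heu, hev]; noncomm_ring
  · -- f2 antimultiplicative
    intro u hu v hv
    obtain ⟨h2u, h1u, heu⟩ := hspec u hu
    obtain ⟨h2v, h1v, hev⟩ := hspec v hv
    refine (char (u * v) ((commutatorIdeal R).mul_mem_right u v hu)
      (f2 v * f2 u)
      ((JordanAux.Phi φ (u*v) - JordanAux.Phi φ v * JordanAux.Phi φ u)
        + f2 v * f1 u + f1 v * f2 u + f1 v * f1 u)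
      ((Vphi φ).mul_mem_right _ _ h2v) ?_ ?_).1
    · exact (Wphi φ).add_mem ((Wphi φ).add_mem ((Wphi φ).add_mem (JordanAux.memW φ u v)
        ((Wphi φ).mul_mem_left _ _ h1u)) ((Wphi φ).mul_mem_right _ _ h1v))
        ((Wphi φ).mul_mem_right _ _ h1v)
    · rw [heu, hev]; noncomm_ring
  · -- sum
    intro u hu
    obtain ⟨h2u, h1u, heu⟩ := hspec u hu
    have := congrArg (fun z : rngGen φ => (z : R')) heu
    push_cast at this
    rw [JordanAux.coe_Phi] at this
    rw [this]; exact add_comm _ _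
  · -- the ideals
    refine ⟨Wphi φ, Vphi φ, fun u hu => (hspec u hu).2.1, fun u hu => (hspec u hu).1, ?_⟩
    have : ∀ x : rngGen φ, x ∈ Wphi φ ⊓ Vphi φ ↔ x ∈ (⊥ : TwoSidedIdeal (rngGen φ)) := by
      intro x
      rw [TwoSidedIdeal.mem_inf, TwoSidedIdeal.mem_bot]
      constructor
      · rintro ⟨hxW, hxV⟩
        have h0 : x * x = 0 := VW _ hxV _ hxW
        have h0' : (x : R') * (x : R') = 0 := by
          have := congrArg (fun z : rngGen φ => (z : R')) h0
          push_cast at this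
          exact this
        exact Subtype.coe_injective (hred _ h0')
      · rintro rfl
        exact ⟨(Wphi φ).zero_mem, (Vphi φ).zero_mem⟩
    exact SetLike.ext this
  · -- f1 module conditions
    intro u hu x
    obtain ⟨h2u, h1u, heu⟩ := hspec u hu
    constructor
    · have h := (char (u * x) ((commutatorIdeal R).mul_mem_right u x hu)
        ((JordanAux.Phi φ (u*x) - JordanAux.Phi φ u * JordanAux.Phi φ x)
          + f2 u * JordanAux.Phi φ x)
        (f1 u * JordanAux.Phi φ x)
        ((Vphi φ).add_mem (JordanAux.memV φ u x) ((Vphi φ).mul_mem_right _ _ h2u))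
        ((Wphi φ).mul_mem_right _ _ h1u)
        (by rw [heu]; noncomm_ring)).2
      rw [h]; push_cast; rw [JordanAux.coe_Phi]
    · have h := (char (x * u) ((commutatorIdeal R).mul_mem_left x u hu)
        ((JordanAux.Phi φ (x*u) - JordanAux.Phi φ x * JordanAux.Phi φ u)
          + JordanAux.Phi φ x * f2 u)
        (JordanAux.Phi φ x * f1 u)
        ((Vphi φ).add_mem (JordanAux.memV φ x u) ((Vphi φ).mul_mem_left _ _ h2u))
        ((Wphi φ).mul_mem_left _ _ h1u)
        (by rw [heu]; noncomm_ring)).2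
      rw [h]; push_cast; rw [JordanAux.coe_Phi]
  · -- f2 module conditions
    intro u hu x
    obtain ⟨h2u, h1u, heu⟩ := hspec u hu
    constructor
    · have h := (char (u * x) ((commutatorIdeal R).mul_mem_right u x hu)
        (JordanAux.Phi φ x * f2 u)
        ((JordanAux.Phi φ (u*x) - JordanAux.Phi φ x * JordanAux.Phi φ u)
          + JordanAux.Phi φ x * f1 u)
        ((Vphi φ).mul_mem_left _ _ h2u)
        ((Wphi φ).add_mem (JordanAux.memW φ u x) ((Wphi φ).mul_mem_left _ _ h1u))
        (by rw [heu]; noncomm_ring)).1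
      rw [h]; push_cast; rw [JordanAux.coe_Phi]
    · have h := (char (x * u) ((commutatorIdeal R).mul_mem_left x u hu)
        (f2 u * JordanAux.Phi φ x)
        ((JordanAux.Phi φ (x*u) - JordanAux.Phi φ u * JordanAux.Phi φ x)
          + f1 u * JordanAux.Phi φ x)
        ((Vphi φ).mul_mem_right _ _ h2u)
        ((Wphi φ).add_mem (JordanAux.memW φ x u) ((Wphi φ).mul_mem_right _ _ h1u))
        (by rw [heu]; noncomm_ring)).1
      rw [h]; push_cast; rw [JordanAux.coe_Phi]
end

section
/- Let φ : R → R' be a splittable Jordan homomorphism. If x and y are elements of R with xy = yx, then φ(xy) = φ(x)φ(y) = φ(y)φ(x). -/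
/-- A splittable Jordan homomorphism sends products of commuting elements to
products: if `xy = yx` then `φ(xy) = φ(x)φ(y) = φ(y)φ(x)`. -/
theorem splittable_map_commuting {R R' : Type*} [NonUnitalRing R] [NonUnitalRing R']
    (φ : R → R') (hφ : IsJordanHom φ) (hs : Splittable φ)
    (x y : R) (hxy : x * y = y * x) :
    φ (x * y) = φ x * φ y ∧ φ (x * y) = φ y * φ x := by
  have hm : ∀ z : R, φ z ∈ rngGen φ := fun z =>
    NonUnitalSubring.subset_closure ⟨z, rfl⟩
  have key : ∀ c : R', (∃ u v : R, c = φ (u * v) - φ u * φ v) →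
      (∃ u v : R, c = φ (u * v) - φ v * φ u) → (hc : c ∈ rngGen φ) → c = 0 := by
    intro c h1 h2 hc
    have hmem : (⟨c, hc⟩ : rngGen φ) ∈ Vphi φ ⊓ Wphi φ := by
      exact ⟨TwoSidedIdeal.subset_span (by simpa using h1),
        TwoSidedIdeal.subset_span (by simpa using h2)⟩
    rw [hs, TwoSidedIdeal.mem_bot] at hmem
    exact congrArg Subtype.val hmem
  have h1 : φ (x * y) - φ x * φ y = 0 := by
    refine key _ ⟨x, y, rfl⟩ ⟨y, x, by rw [← hxy]⟩ ?_
    exact (rngGen φ).sub_mem (hm _) ((rngGen φ).mul_mem (hm _) (hm _))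
  have h2 : φ (x * y) - φ y * φ x = 0 := by
    refine key _ ⟨y, x, by rw [← hxy]⟩ ⟨x, y, rfl⟩ ?_
    exact (rngGen φ).sub_mem (hm _) ((rngGen φ).mul_mem (hm _) (hm _))
  exact ⟨sub_eq_zero.mp h1, sub_eq_zero.mp h2⟩
end

section
/- Let φ : R → R' be a Jordan homomorphism. If the commutator ideal K of R is a direct summand of R (there exists an ideal C of R with K + C = R and K ∩ C = {0}) and R' is a reduced ring, then φ is the sum of a homomorphism and an antihomomorphism on the whole ring R (taking I = R in the definition). -/
/-! ### Auxiliary machinery for the proof -/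

namespace JordanSumAux

section Reduced

variable {R' : Type*} [NonUnitalRing R']

lemma red_comm (hred : ∀ a : R', a * a = 0 → a = 0) {a b : R'} (h : a * b = 0) :
    b * a = 0 := by
  apply hred
  calc b * a * (b * a) = b * (a * b) * a := by simp only [mul_assoc]
  _ = 0 := by rw [h]; simp

lemma red_mid (hred : ∀ a : R', a * a = 0 → a = 0) {a b : R'} (h : a * b = 0) (z : R') :
    a * (z * b) = 0 := by
  apply hred
  have hba := red_comm hred h
  calc a * (z * b) * (a * (z * b)) = a * (z * ((b * a) * (z * b))) := by
        simp only [mul_assoc]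
  _ = 0 := by rw [hba]; simp

variable {S : NonUnitalSubring R'}

/-- In a reduced ring, the two-sided annihilator of any set, intersected with a
subring `S`, is a two-sided ideal of `S`. -/
def annIdeal (hred : ∀ a : R', a * a = 0 → a = 0) (T : Set R') : TwoSidedIdeal S :=
  TwoSidedIdeal.mk' {b : S | ∀ t ∈ T, (b : R') * t = 0 ∧ t * (b : R') = 0}
    (fun t _ => by simp)
    (fun {x y} hx hy t ht => by
      obtain ⟨h1, h2⟩ := hx t ht; obtain ⟨h3, h4⟩ := hy t ht
      push_cast
      constructor
      · rw [add_mul, h1, h3]; simp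
      · rw [mul_add, h2, h4]; simp)
    (fun {x} hx t ht => by
      obtain ⟨h1, h2⟩ := hx t ht
      push_cast
      constructor
      · rw [neg_mul, h1]; simp
      · rw [mul_neg, h2]; simp)
    (fun {x y} hy t ht => by
      obtain ⟨h1, h2⟩ := hy t ht
      push_cast
      constructor
      · rw [mul_assoc, h1]; simp
      · exact red_mid hred h2 (x : R'))
    (fun {x y} hx t ht => by
      obtain ⟨h1, h2⟩ := hx t ht
      push_cast
      constructor
      · rw [mul_assoc]; exact red_mid hred h1 (y : R')
      · rw [← mul_assoc, h2]; simp)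

lemma mem_annIdeal_iff (hred : ∀ a : R', a * a = 0 → a = 0) (T : Set R') (b : S) :
    b ∈ annIdeal (S := S) hred T ↔ ∀ t ∈ T, (b : R') * t = 0 ∧ t * (b : R') = 0 :=
  TwoSidedIdeal.mem_mk' _ _ _ _ _ _ b

lemma span_ann (hred : ∀ a : R', a * a = 0 → a = 0) {s : Set S} {a : R'}
    (h : ∀ b ∈ s, (b : R') * a = 0 ∧ a * (b : R') = 0) :
    ∀ v ∈ TwoSidedIdeal.span s, (v : R') * a = 0 ∧ a * (v : R') = 0 := by
  intro v hv
  have := TwoSidedIdeal.mem_span_iff.mp hv (annIdeal hred {a})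
    (fun b hb => (mem_annIdeal_iff hred {a} b).mpr
      (fun t ht => by rw [Set.mem_singleton_iff] at ht; subst ht; exact h b hb))
  exact (mem_annIdeal_iff hred {a} v).mp this a rfl

end Reduced

section Jordan

variable {R R' : Type*} [NonUnitalRing R] [NonUnitalRing R'] (φ : R → R')

/-- The homomorphism defect `{x,y}`. -/
def eJ (x y : R) : R' := φ (x * y) - φ x * φ y

/-- The antihomomorphism defect `⟨x,y⟩`. -/
def dJ (x y : R) : R' := φ (x * y) - φ y * φ x

variable {φ}

lemma jphi_zero (h1 : ∀ x y : R, φ (x + y) = φ x + φ y) : φ 0 = 0 := by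
  have h : φ 0 + φ 0 = φ 0 + 0 := by rw [← h1]; simp
  exact add_left_cancel h

lemma jphi_neg (h1 : ∀ x y : R, φ (x + y) = φ x + φ y) (x : R) : φ (-x) = - φ x := by
  have h : φ x + φ (-x) = 0 := by rw [← h1]; simp [jphi_zero h1]
  exact eq_neg_of_add_eq_zero_right h

lemma jphi_sub (h1 : ∀ x y : R, φ (x + y) = φ x + φ y) (x y : R) :
    φ (x - y) = φ x - φ y := by
  rw [sub_eq_add_neg, h1, jphi_neg h1, sub_eq_add_neg]

lemma jordan_I1 (hφ : IsJordanHom φ) (x y : R) :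
    φ (x * y) + φ (y * x) = φ x * φ y + φ y * φ x := by
  obtain ⟨h1, h2, h3⟩ := hφ
  have h := h2 (x + y)
  have e1 : (x + y) * (x + y) = x * x + (x * y + y * x) + y * y := by
    rw [mul_add, add_mul, add_mul]; abel
  rw [e1] at h; simp only [h1, h2] at h
  have e2 : (φ x + φ y) * (φ x + φ y)
      = φ x * φ x + (φ x * φ y + φ y * φ x) + φ y * φ y := by
    rw [mul_add, add_mul, add_mul]; abel
  rw [e2] at h
  rw [← sub_eq_zero] at h ⊢
  abel_nf at h ⊢
  exact h

lemma jordan_I2 (hφ : IsJordanHom φ) (x z w : R) :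
    φ (x * z * w) + φ (w * z * x) = φ x * φ z * φ w + φ w * φ z * φ x := by
  obtain ⟨h1, h2, h3⟩ := hφ
  have h := h3 (x + w) z
  have e1 : (x + w) * z * (x + w) = x * z * x + (x * z * w + w * z * x) + w * z * w := by
    rw [add_mul, add_mul, mul_add, mul_add]; abel
  rw [e1] at h; simp only [h1, h3] at h
  have e2 : (φ x + φ w) * φ z * (φ x + φ w)
      = φ x * φ z * φ x + (φ x * φ z * φ w + φ w * φ z * φ x) + φ w * φ z * φ w := by
    rw [add_mul, add_mul, mul_add, mul_add]; abel
  rw [e2] at h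
  rw [← sub_eq_zero] at h ⊢
  abel_nf at h ⊢
  exact h

lemma jordan_ed (hφ : IsJordanHom φ) (x y : R) : eJ φ x y * dJ φ x y = 0 := by
  obtain ⟨h1, h2, h3⟩ := hφ
  have H := jordan_I2 ⟨h1, h2, h3⟩ x y (x * y)
  rw [h2 (x * y)] at H
  have e1 : x * y * y * x = x * (y * y) * x := by rw [mul_assoc x y y]
  rw [e1, h3, h2] at H
  have hp : φ (x * y) * φ (x * y)
      = φ x * φ y * φ (x * y) + φ (x * y) * φ y * φ x - φ x * (φ y * φ y) * φ x := by
    rw [eq_sub_iff_add_eq]; exact H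
  show (φ (x * y) - φ x * φ y) * (φ (x * y) - φ y * φ x) = 0
  rw [sub_mul, mul_sub, mul_sub, hp]
  simp only [mul_assoc]
  abel

lemma jordan_de (hφ : IsJordanHom φ) (x y : R) : dJ φ x y * eJ φ x y = 0 := by
  obtain ⟨h1, h2, h3⟩ := hφ
  have H := jordan_I2 ⟨h1, h2, h3⟩ (x * y) x y
  rw [mul_assoc (x*y) x y, h2 (x * y)] at H
  have e1 : y * x * (x * y) = y * (x * x) * y := by
    rw [mul_assoc, ← mul_assoc x x y, ← mul_assoc y]
  rw [e1, h3, h2] at H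
  have hp : φ (x * y) * φ (x * y)
      = φ (x * y) * φ x * φ y + φ y * φ x * φ (x * y) - φ y * (φ x * φ x) * φ y := by
    rw [eq_sub_iff_add_eq]; exact H
  show (φ (x * y) - φ y * φ x) * (φ (x * y) - φ x * φ y) = 0
  rw [sub_mul, mul_sub, mul_sub, hp]
  simp only [mul_assoc]
  abel

lemma eJ_add_left (hφ : IsJordanHom φ) (x u y : R) :
    eJ φ (x + u) y = eJ φ x y + eJ φ u y := by
  simp only [eJ, add_mul, hφ.1]; abel

lemma eJ_add_right (hφ : IsJordanHom φ) (x y v : R) :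
    eJ φ x (y + v) = eJ φ x y + eJ φ x v := by
  simp only [eJ, mul_add, hφ.1]; abel

lemma dJ_add_left (hφ : IsJordanHom φ) (x u y : R) :
    dJ φ (x + u) y = dJ φ x y + dJ φ u y := by
  simp only [dJ, add_mul, mul_add, hφ.1]; abel

lemma dJ_add_right (hφ : IsJordanHom φ) (x y v : R) :
    dJ φ x (y + v) = dJ φ x y + dJ φ x v := by
  simp only [dJ, mul_add, add_mul, hφ.1]; abel

lemma jordan_ed_mixed1 (hφ : IsJordanHom φ) (hred : ∀ a : R', a * a = 0 → a = 0)
    (x u y : R) : eJ φ x y * dJ φ u y = 0 := by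
  have hsum : eJ φ x y * dJ φ u y + eJ φ u y * dJ φ x y = 0 := by
    have h := jordan_ed hφ (x + u) y
    rw [eJ_add_left hφ, dJ_add_left hφ, add_mul, mul_add, mul_add,
        jordan_ed hφ, jordan_ed hφ] at h
    rw [← h]; abel
  have hsum' : dJ φ u y * eJ φ x y + dJ φ x y * eJ φ u y = 0 := by
    have h := jordan_de hφ (x + u) y
    rw [eJ_add_left hφ, dJ_add_left hφ, add_mul, mul_add, mul_add,
        jordan_de hφ, jordan_de hφ] at h
    rw [← h]; abel
  apply hred
  have h2 : dJ φ u y * eJ φ x y = - (dJ φ x y * eJ φ u y) :=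
    eq_neg_of_add_eq_zero_left hsum'
  calc eJ φ x y * dJ φ u y * (eJ φ x y * dJ φ u y)
      = eJ φ x y * (dJ φ u y * eJ φ x y) * dJ φ u y := by simp only [mul_assoc]
    _ = -(eJ φ x y * dJ φ x y * (eJ φ u y * dJ φ u y)) := by
        rw [h2]
        try simp only [mul_neg, neg_mul, mul_assoc]
    _ = 0 := by rw [jordan_ed hφ]; simp

lemma jordan_de_mixed1 (hφ : IsJordanHom φ) (hred : ∀ a : R', a * a = 0 → a = 0)
    (x u y : R) : dJ φ u y * eJ φ x y = 0 :=
  red_comm hred (jordan_ed_mixed1 hφ hred x u y)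

lemma jordan_ed_full (hφ : IsJordanHom φ) (hred : ∀ a : R', a * a = 0 → a = 0)
    (x y u v : R) : eJ φ x y * dJ φ u v = 0 := by
  have hsum : eJ φ x y * dJ φ u v + eJ φ x v * dJ φ u y = 0 := by
    have h := jordan_ed_mixed1 hφ hred x u (y + v)
    rw [eJ_add_right hφ, dJ_add_right hφ, add_mul, mul_add, mul_add,
        jordan_ed_mixed1 hφ hred, jordan_ed_mixed1 hφ hred] at h
    rw [← h]; abel
  have hsum' : dJ φ u v * eJ φ x y + dJ φ u y * eJ φ x v = 0 := by
    have h := jordan_de_mixed1 hφ hred x u (y + v)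
    rw [eJ_add_right hφ, dJ_add_right hφ, add_mul, mul_add, mul_add,
        jordan_de_mixed1 hφ hred, jordan_de_mixed1 hφ hred] at h
    rw [← h]; abel
  apply hred
  have h2 : dJ φ u v * eJ φ x y = - (dJ φ u y * eJ φ x v) :=
    eq_neg_of_add_eq_zero_left hsum'
  calc eJ φ x y * dJ φ u v * (eJ φ x y * dJ φ u v)
      = eJ φ x y * (dJ φ u v * eJ φ x y) * dJ φ u v := by simp only [mul_assoc]
    _ = -(eJ φ x y * dJ φ u y * (eJ φ x v * dJ φ u v)) := by
        rw [h2]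
        try simp only [mul_neg, neg_mul, mul_assoc]
    _ = 0 := by rw [jordan_ed_mixed1 hφ hred]; simp

lemma jordan_de_full (hφ : IsJordanHom φ) (hred : ∀ a : R', a * a = 0 → a = 0)
    (x y u v : R) : dJ φ u v * eJ φ x y = 0 :=
  red_comm hred (jordan_ed_full hφ hred x y u v)

end Jordan

end JordanSumAux

namespace JordanSumAux

section Summand

variable {R R' : Type*} [NonUnitalRing R] [NonUnitalRing R'] {φ : R → R'}
  {C : TwoSidedIdeal R}

lemma KC_zero (hdisj : commutatorIdeal R ⊓ C = ⊥) {k c : R}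
    (hk : k ∈ commutatorIdeal R) (hc : c ∈ C) : k * c = 0 ∧ c * k = 0 := by
  constructor
  · have h1 : k * c ∈ commutatorIdeal R := (commutatorIdeal R).mul_mem_right k c hk
    have h2 : k * c ∈ C := C.mul_mem_left k c hc
    have : k * c ∈ commutatorIdeal R ⊓ C := (TwoSidedIdeal.mem_inf _).mpr ⟨h1, h2⟩
    rw [hdisj] at this
    exact (TwoSidedIdeal.mem_bot _).mp this
  · have h1 : c * k ∈ commutatorIdeal R := (commutatorIdeal R).mul_mem_left c k hk
    have h2 : c * k ∈ C := C.mul_mem_right c k hc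
    have : c * k ∈ commutatorIdeal R ⊓ C := (TwoSidedIdeal.mem_inf _).mpr ⟨h1, h2⟩
    rw [hdisj] at this
    exact (TwoSidedIdeal.mem_bot _).mp this

lemma c_comm (hdisj : commutatorIdeal R ⊓ C = ⊥) {c : R} (hc : c ∈ C) (r : R) :
    c * r = r * c := by
  have h1 : c * r - r * c ∈ commutatorIdeal R := TwoSidedIdeal.subset_span ⟨c, r, rfl⟩
  have h2 : c * r - r * c ∈ C :=
    C.sub_mem (C.mul_mem_right c r hc) (C.mul_mem_left r c hc)
  have : c * r - r * c ∈ commutatorIdeal R ⊓ C := (TwoSidedIdeal.mem_inf _).mpr ⟨h1, h2⟩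
  rw [hdisj] at this
  exact sub_eq_zero.mp ((TwoSidedIdeal.mem_bot _).mp this)

lemma phiCK (hφ : IsJordanHom φ) (hdisj : commutatorIdeal R ⊓ C = ⊥)
    (hred : ∀ a : R', a * a = 0 → a = 0) {c k : R} (hc : c ∈ C)
    (hk : k ∈ commutatorIdeal R) : φ c * φ k = 0 ∧ φ k * φ c = 0 := by
  obtain ⟨hkc, hck⟩ := KC_zero hdisj hk hc
  have hI1 := jordan_I1 hφ c k
  rw [hck, hkc, jphi_zero hφ.1] at hI1
  -- hI1 : 0 + 0 = φ c * φ k + φ k * φ c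
  have htr := hφ.2.2 c k
  rw [show c * k * c = 0 by rw [hck, zero_mul], jphi_zero hφ.1] at htr
  have hu : φ c * φ k = 0 := by
    apply hred
    calc φ c * φ k * (φ c * φ k) = (φ c * φ k * φ c) * φ k := by simp only [mul_assoc]
    _ = 0 := by rw [← htr]; simp
  refine ⟨hu, ?_⟩
  have : φ c * φ k + φ k * φ c = 0 := by rw [← hI1]; simp
  rw [hu] at this; simpa using this

lemma eJ_CC (hφ : IsJordanHom φ) (hdisj : commutatorIdeal R ⊓ C = ⊥)
    (hred : ∀ a : R', a * a = 0 → a = 0) {c c' : R} (hc : c ∈ C) (hc' : c' ∈ C) :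
    eJ φ c c' = 0 ∧ dJ φ c c' = 0 := by
  have hcomm : c * c' = c' * c := c_comm hdisj hc c'
  have hI1 := jordan_I1 hφ c c'
  have hφcomm : φ (c' * c) = φ (c * c') := by rw [hcomm]
  rw [hφcomm] at hI1
  have hst : eJ φ c c' + dJ φ c c' = 0 := by
    have e0 : eJ φ c c' + dJ φ c c'
        = (φ (c * c') + φ (c * c')) - (φ c * φ c' + φ c' * φ c) := by
      simp only [eJ, dJ]; abel
    rw [e0, hI1, sub_self]
  have hts : dJ φ c c' = - eJ φ c c' := eq_neg_of_add_eq_zero_right hst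
  have hs2 : eJ φ c c' * eJ φ c c' = 0 := by
    have h := jordan_ed hφ c c'
    rw [hts, mul_neg, neg_eq_zero] at h
    exact h
  have hs := hred _ hs2
  exact ⟨hs, by rw [hts, hs, neg_zero]⟩

lemma eJ_reduce (hφ : IsJordanHom φ) (hdisj : commutatorIdeal R ⊓ C = ⊥)
    (hred : ∀ a : R', a * a = 0 → a = 0) {k c k' c' : R}
    (hk : k ∈ commutatorIdeal R) (hc : c ∈ C)
    (hk' : k' ∈ commutatorIdeal R) (hc' : c' ∈ C) :
    eJ φ (k + c) (k' + c') = eJ φ k k' ∧ dJ φ (k + c) (k' + c') = dJ φ k k' := by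
  have hkc' : k * c' = 0 := (KC_zero hdisj hk hc').1
  have hck' : c * k' = 0 := (KC_zero hdisj hk' hc).2
  have hφkc' : φ c * φ k' = 0 ∧ φ k' * φ c = 0 := phiCK hφ hdisj hred hc hk'
  have hφck : φ c' * φ k = 0 ∧ φ k * φ c' = 0 := phiCK hφ hdisj hred hc' hk
  have he1 : eJ φ k c' = 0 := by
    simp only [eJ]; rw [hkc', jphi_zero hφ.1, hφck.2]; simp
  have he2 : eJ φ c k' = 0 := by
    simp only [eJ]; rw [hck', jphi_zero hφ.1, hφkc'.1]; simp
  have he3 : eJ φ c c' = 0 := (eJ_CC hφ hdisj hred hc hc').1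
  have hd1 : dJ φ k c' = 0 := by
    simp only [dJ]; rw [hkc', jphi_zero hφ.1, hφck.1]; simp
  have hd2 : dJ φ c k' = 0 := by
    simp only [dJ]; rw [hck', jphi_zero hφ.1, hφkc'.2]; simp
  have hd3 : dJ φ c c' = 0 := (eJ_CC hφ hdisj hred hc hc').2
  constructor
  · rw [eJ_add_left hφ, eJ_add_right hφ, eJ_add_right hφ, he1, he2, he3]; abel
  · rw [dJ_add_left hφ, dJ_add_right hφ, dJ_add_right hφ, hd1, hd2, hd3]; abel

end Summand

end JordanSumAux

namespace JordanSumAux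

section RngGen

variable {R R' : Type*} [NonUnitalRing R] [NonUnitalRing R'] {φ : R → R'}
  {C : TwoSidedIdeal R}

lemma mem_rngGen (φ : R → R') (x : R) : φ x ∈ rngGen φ :=
  NonUnitalSubring.subset_closure ⟨x, rfl⟩

/-- `{x,y}` as an element of `R'_φ`. -/
def eE (φ : R → R') (x y : R) : rngGen φ :=
  ⟨eJ φ x y, sub_mem (mem_rngGen φ (x * y)) (mul_mem (mem_rngGen φ x) (mem_rngGen φ y))⟩

/-- `⟨x,y⟩` as an element of `R'_φ`. -/
def dE (φ : R → R') (x y : R) : rngGen φ :=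
  ⟨dJ φ x y, sub_mem (mem_rngGen φ (x * y)) (mul_mem (mem_rngGen φ y) (mem_rngGen φ x))⟩

@[simp] lemma coe_eE (φ : R → R') (x y : R) : ((eE φ x y : rngGen φ) : R') = eJ φ x y := rfl
@[simp] lemma coe_dE (φ : R → R') (x y : R) : ((dE φ x y : rngGen φ) : R') = dJ φ x y := rfl

/-- `φ x` as an element of `R'_φ`. -/
def PhiG (φ : R → R') (x : R) : rngGen φ := ⟨φ x, mem_rngGen φ x⟩

@[simp] lemma coe_PhiG (φ : R → R') (x : R) : ((PhiG φ x : rngGen φ) : R') = φ x := rfl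

lemma eE_memV (φ : R → R') (x y : R) : eE φ x y ∈ Vphi φ :=
  TwoSidedIdeal.subset_span ⟨x, y, rfl⟩

lemma dE_memW (φ : R → R') (x y : R) : dE φ x y ∈ Wphi φ :=
  TwoSidedIdeal.subset_span ⟨x, y, rfl⟩

lemma W_ann_eJ (hφ : IsJordanHom φ) (hred : ∀ a : R', a * a = 0 → a = 0) (x y : R) :
    ∀ w ∈ Wphi φ, (w : R') * eJ φ x y = 0 ∧ eJ φ x y * (w : R') = 0 := by
  apply span_ann hred
  rintro b ⟨u, v', hb⟩
  rw [hb]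
  exact ⟨jordan_de_full hφ hred x y u v', jordan_ed_full hφ hred x y u v'⟩

lemma VW_zero (hφ : IsJordanHom φ) (hred : ∀ a : R', a * a = 0 → a = 0) :
    ∀ v ∈ Vphi φ, ∀ w ∈ Wphi φ, (v : R') * w = 0 ∧ (w : R') * v = 0 := by
  intro v hv w hw
  have cond : ∀ b ∈ {a : rngGen φ | ∃ x y : R, (a : R') = φ (x * y) - φ x * φ y},
      (b : R') * (w : R') = 0 ∧ (w : R') * (b : R') = 0 := by
    rintro b ⟨x, y, hb⟩
    rw [hb]
    have h := W_ann_eJ hφ hred x y w hw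
    exact ⟨h.2, h.1⟩
  exact span_ann hred cond v hv

lemma CV_ann (hφ : IsJordanHom φ)
    (hsum : ∀ x : R, ∃ k ∈ commutatorIdeal R, ∃ c ∈ C, x = k + c)
    (hdisj : commutatorIdeal R ⊓ C = ⊥)
    (hred : ∀ a : R', a * a = 0 → a = 0) {c : R} (hc : c ∈ C) :
    ∀ v ∈ Vphi φ, (v : R') * φ c = 0 ∧ φ c * (v : R') = 0 := by
  apply span_ann hred
  rintro b ⟨x, y, hb⟩
  rw [hb]
  obtain ⟨k, hk, γ, hγ, hx⟩ := hsum x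
  obtain ⟨k', hk', γ', hγ', hy⟩ := hsum y
  subst hx; subst hy
  rw [show φ (k + γ) * φ (k' + γ') = φ (k + γ) * φ (k' + γ') from rfl]
  have hkk' : k * k' ∈ commutatorIdeal R := (commutatorIdeal R).mul_mem_right k k' hk
  have hred1 := (eJ_reduce hφ hdisj hred hk hγ hk' hγ').1
  rw [show φ ((k + γ) * (k' + γ')) - φ (k + γ) * φ (k' + γ') = eJ φ (k + γ) (k' + γ')
    from rfl, hred1]
  have h1 : φ c * φ (k * k') = 0 ∧ φ (k * k') * φ c = 0 := phiCK hφ hdisj hred hc hkk'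
  have h2 : φ c * φ k = 0 ∧ φ k * φ c = 0 := phiCK hφ hdisj hred hc hk
  have h3 : φ c * φ k' = 0 ∧ φ k' * φ c = 0 := phiCK hφ hdisj hred hc hk'
  constructor
  · simp only [eJ, sub_mul]
    rw [h1.2, mul_assoc, h3.2, mul_zero, sub_zero]
  · simp only [eJ, mul_sub]
    rw [h1.1, ← mul_assoc, h2.1, zero_mul, sub_zero]

lemma CW_ann (hφ : IsJordanHom φ)
    (hsum : ∀ x : R, ∃ k ∈ commutatorIdeal R, ∃ c ∈ C, x = k + c)
    (hdisj : commutatorIdeal R ⊓ C = ⊥)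
    (hred : ∀ a : R', a * a = 0 → a = 0) {c : R} (hc : c ∈ C) :
    ∀ w ∈ Wphi φ, (w : R') * φ c = 0 ∧ φ c * (w : R') = 0 := by
  apply span_ann hred
  rintro b ⟨x, y, hb⟩
  rw [hb]
  obtain ⟨k, hk, γ, hγ, hx⟩ := hsum x
  obtain ⟨k', hk', γ', hγ', hy⟩ := hsum y
  subst hx; subst hy
  have hkk' : k * k' ∈ commutatorIdeal R := (commutatorIdeal R).mul_mem_right k k' hk
  have hred1 := (eJ_reduce hφ hdisj hred hk hγ hk' hγ').2
  rw [show φ ((k + γ) * (k' + γ')) - φ (k' + γ') * φ (k + γ) = dJ φ (k + γ) (k' + γ')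
    from rfl, hred1]
  have h1 : φ c * φ (k * k') = 0 ∧ φ (k * k') * φ c = 0 := phiCK hφ hdisj hred hc hkk'
  have h2 : φ c * φ k = 0 ∧ φ k * φ c = 0 := phiCK hφ hdisj hred hc hk
  have h3 : φ c * φ k' = 0 ∧ φ k' * φ c = 0 := phiCK hφ hdisj hred hc hk'
  constructor
  · simp only [dJ, sub_mul]
    rw [h1.2, mul_assoc, h2.2, mul_zero, sub_zero]
  · simp only [dJ, mul_sub]
    rw [h1.1, ← mul_assoc, h3.1, zero_mul, sub_zero]

/-- Every element of the commutator ideal has `φ`-image in `V_φ + W_φ`. -/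
lemma phiK_decomp (hφ : IsJordanHom φ) {k : R} (hk : k ∈ commutatorIdeal R) :
    ∃ v w : rngGen φ, v ∈ Vphi φ ∧ w ∈ Wphi φ ∧ φ k = (v : R') + (w : R') := by
  have key := TwoSidedIdeal.mem_span_iff.mp hk (TwoSidedIdeal.mk'
      {k : R | ∃ v w : rngGen φ, v ∈ Vphi φ ∧ w ∈ Wphi φ ∧ φ k = (v : R') + (w : R')}
      ⟨0, 0, zero_mem _, zero_mem _, by simp [jphi_zero hφ.1]⟩
      (fun {a b} ha hb => by
        obtain ⟨v, w, hv, hw, hva⟩ := ha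
        obtain ⟨v', w', hv', hw', hvb⟩ := hb
        exact ⟨v + v', w + w', add_mem hv hv', add_mem hw hw',
          by rw [hφ.1, hva, hvb]; push_cast; abel⟩)
      (fun {a} ha => by
        obtain ⟨v, w, hv, hw, hva⟩ := ha
        exact ⟨-v, -w, neg_mem hv, neg_mem hw,
          by rw [jphi_neg hφ.1, hva]; push_cast; abel⟩)
      (fun {x a} ha => by
        obtain ⟨v, w, hv, hw, hva⟩ := ha
        refine ⟨eE φ x a + ⟨φ x, mem_rngGen φ x⟩ * v, ⟨φ x, mem_rngGen φ x⟩ * w,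
          (Vphi φ).add_mem (eE_memV φ x a) ((Vphi φ).mul_mem_left _ _ hv),
          (Wphi φ).mul_mem_left _ _ hw, ?_⟩
        have h0 : φ (x * a) = eJ φ x a + φ x * φ a := by simp [eJ]
        rw [h0, hva]
        push_cast
        rw [mul_add]
        simp only [coe_eE]
        abel)
      (fun {a x} ha => by
        obtain ⟨v, w, hv, hw, hva⟩ := ha
        refine ⟨eE φ a x + v * ⟨φ x, mem_rngGen φ x⟩, w * ⟨φ x, mem_rngGen φ x⟩,
          (Vphi φ).add_mem (eE_memV φ a x) ((Vphi φ).mul_mem_right _ _ hv),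
          (Wphi φ).mul_mem_right _ _ hw, ?_⟩
        have h0 : φ (a * x) = eJ φ a x + φ a * φ x := by simp [eJ]
        rw [h0, hva]
        push_cast
        rw [add_mul]
        simp only [coe_eE]
        abel))
    (by
      rintro z ⟨x, y, rfl⟩
      rw [SetLike.mem_coe, TwoSidedIdeal.mem_mk']
      refine ⟨eE φ x y, dE φ x y, eE_memV φ x y, dE_memW φ x y, ?_⟩
      have hyx : φ (y * x) = φ x * φ y + φ y * φ x - φ (x * y) :=
        eq_sub_of_add_eq' (jordan_I1 hφ x y)
      rw [jphi_sub hφ.1, hyx]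
      push_cast
      simp only [coe_eE, coe_dE, eJ, dJ]
      abel)
  rwa [TwoSidedIdeal.mem_mk'] at key

/-- Uniqueness of the `V`–`W` decomposition. -/
lemma uniqVW (hφ : IsJordanHom φ) (hred : ∀ a : R', a * a = 0 → a = 0)
    {v₁ w₁ v₂ w₂ : rngGen φ} (hv₁ : v₁ ∈ Vphi φ) (hw₁ : w₁ ∈ Wphi φ)
    (hv₂ : v₂ ∈ Vphi φ) (hw₂ : w₂ ∈ Wphi φ)
    (h : (v₁ : R') + (w₁ : R') = (v₂ : R') + (w₂ : R')) : v₁ = v₂ ∧ w₁ = w₂ := by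
  have hz' : (v₁ : R') - v₂ = (w₂ : R') - w₁ := by
    calc (v₁ : R') - v₂ = ((v₁ : R') + w₁) - w₁ - v₂ := by abel
    _ = ((v₂ : R') + w₂) - w₁ - v₂ := by rw [h]
    _ = (w₂ : R') - w₁ := by abel
  have hz : v₁ - v₂ = w₂ - w₁ := Subtype.ext (by push_cast; exact hz')
  have hzV : v₁ - v₂ ∈ Vphi φ := sub_mem hv₁ hv₂
  have hzW : v₁ - v₂ ∈ Wphi φ := hz ▸ sub_mem hw₂ hw₁
  have hz0 : ((v₁ - v₂ : rngGen φ) : R') = 0 :=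
    hred _ (VW_zero hφ hred _ hzV _ hzW).1
  have hv : v₁ = v₂ := by
    push_cast at hz0
    exact Subtype.ext (sub_eq_zero.mp hz0)
  rw [hv] at h
  exact ⟨hv, Subtype.ext (add_left_cancel h)⟩

end RngGen

end JordanSumAux

open JordanSumAux

/-- If the commutator ideal `K` of `R` is a direct summand (there is an ideal `C`
with `K + C = R` and `K ∩ C = {0}`) and `R'` is a reduced ring (for associative
rings: `x² = 0` implies `x = 0`), then every Jordan homomorphism `φ : R → R'` is
the sum of a homomorphism and an antihomomorphism on the whole ring `R`. -/
theorem jordanHom_sum_of_commutatorIdeal_summand_reduced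
    {R R' : Type*} [NonUnitalRing R] [NonUnitalRing R']
    (φ : R → R') (hφ : IsJordanHom φ)
    (C : TwoSidedIdeal R)
    (hsum : ∀ x : R, ∃ k ∈ commutatorIdeal R, ∃ c ∈ C, x = k + c)
    (hdisj : commutatorIdeal R ⊓ C = ⊥)
    (hred : ∀ a : R', a * a = 0 → a = 0) :
    IsSumHomAntihomOn φ (⊤ : TwoSidedIdeal R) := by
  classical
  have hsumc := hsum
  choose kk hkK ccf hcC hxeq using hsum
  choose vvf wwf hvV hwW hphik using fun x => phiK_decomp hφ (hkK x)
  have uniqKC : ∀ {k₁ c₁ k₂ c₂ : R}, k₁ ∈ commutatorIdeal R → c₁ ∈ C →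
      k₂ ∈ commutatorIdeal R → c₂ ∈ C → k₁ + c₁ = k₂ + c₂ → k₁ = k₂ ∧ c₁ = c₂ := by
    intro k₁ c₁ k₂ c₂ hk₁ hc₁ hk₂ hc₂ h
    have hk : k₁ - k₂ = c₂ - c₁ := by
      calc k₁ - k₂ = (k₁ + c₁) - c₁ - k₂ := by abel
      _ = (k₂ + c₂) - c₁ - k₂ := by rw [h]
      _ = c₂ - c₁ := by abel
    have h1 : k₁ - k₂ ∈ commutatorIdeal R := sub_mem hk₁ hk₂
    have h2 : k₁ - k₂ ∈ C := hk ▸ sub_mem hc₂ hc₁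
    have h0 : k₁ - k₂ = 0 := by
      have hmem : k₁ - k₂ ∈ commutatorIdeal R ⊓ C := (TwoSidedIdeal.mem_inf _).mpr ⟨h1, h2⟩
      rw [hdisj] at hmem
      exact (TwoSidedIdeal.mem_bot _).mp hmem
    have hkk : k₁ = k₂ := sub_eq_zero.mp h0
    refine ⟨hkk, ?_⟩
    rw [hkk] at h
    exact add_left_cancel h
  have hkadd : ∀ x y : R, kk (x + y) = kk x + kk y ∧ ccf (x + y) = ccf x + ccf y := by
    intro x y
    refine uniqKC (hkK _) (hcC _) (add_mem (hkK x) (hkK y)) (add_mem (hcC x) (hcC y)) ?_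
    calc kk (x + y) + ccf (x + y) = x + y := (hxeq (x + y)).symm
    _ = (kk x + ccf x) + (kk y + ccf y) := by rw [← hxeq x, ← hxeq y]
    _ = (kk x + kk y) + (ccf x + ccf y) := by abel
  have hkmul : ∀ x y : R, kk (x * y) = kk x * kk y ∧ ccf (x * y) = ccf x * ccf y := by
    intro x y
    refine uniqKC (hkK _) (hcC _) ((commutatorIdeal R).mul_mem_right _ _ (hkK x))
      (C.mul_mem_left _ _ (hcC y)) ?_
    calc kk (x * y) + ccf (x * y) = x * y := (hxeq (x * y)).symm
    _ = (kk x + ccf x) * (kk y + ccf y) := by rw [← hxeq x, ← hxeq y]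
    _ = kk x * kk y + ccf x * ccf y := by
        rw [add_mul, mul_add, mul_add, (KC_zero hdisj (hkK x) (hcC y)).1,
          (KC_zero hdisj (hkK y) (hcC x)).2]
        abel
  have zVW : ∀ a b : R, (vvf a : R') * (wwf b : R') = 0 :=
    fun a b => (VW_zero hφ hred (vvf a) (hvV a) (wwf b) (hwW b)).1
  have zWV : ∀ a b : R, (wwf a : R') * (vvf b : R') = 0 :=
    fun a b => (VW_zero hφ hred (vvf b) (hvV b) (wwf a) (hwW a)).2
  have zVC : ∀ a b : R, (vvf a : R') * φ (ccf b) = 0 :=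
    fun a b => (CV_ann hφ hsumc hdisj hred (hcC b) (vvf a) (hvV a)).1
  have zCV : ∀ a b : R, φ (ccf a) * (vvf b : R') = 0 :=
    fun a b => (CV_ann hφ hsumc hdisj hred (hcC a) (vvf b) (hvV b)).2
  have zWC : ∀ a b : R, (wwf a : R') * φ (ccf b) = 0 :=
    fun a b => (CW_ann hφ hsumc hdisj hred (hcC b) (wwf a) (hwW a)).1
  have zCW : ∀ a b : R, φ (ccf a) * (wwf b : R') = 0 :=
    fun a b => (CW_ann hφ hsumc hdisj hred (hcC a) (wwf b) (hwW b)).2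
  have hvwadd : ∀ x y : R, vvf (x + y) = vvf x + vvf y ∧ wwf (x + y) = wwf x + wwf y := by
    intro x y
    refine uniqVW hφ hred (hvV (x+y)) (hwW (x+y)) (add_mem (hvV x) (hvV y))
      (add_mem (hwW x) (hwW y)) ?_
    calc (vvf (x + y) : R') + (wwf (x + y) : R') = φ (kk (x + y)) := (hphik (x + y)).symm
    _ = φ (kk x) + φ (kk y) := by rw [(hkadd x y).1, hφ.1]
    _ = _ := by rw [hphik x, hphik y]; push_cast; abel
  have hvwmul : ∀ x y : R, vvf (x * y) = vvf y * vvf x ∧ wwf (x * y) = wwf x * wwf y := by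
    intro x y
    constructor
    · refine (uniqVW hφ hred (hvV (x*y)) (hwW (x*y))
        ((Vphi φ).mul_mem_left (vvf y) (vvf x) (hvV x))
        ((Wphi φ).add_mem (dE_memW φ (kk x) (kk y))
          ((Wphi φ).mul_mem_left (wwf y) (wwf x) (hwW x)))
        ?_).1
      calc (vvf (x * y) : R') + (wwf (x * y) : R') = φ (kk (x * y)) := (hphik (x * y)).symm
      _ = φ (kk x * kk y) := by rw [(hkmul x y).1]
      _ = dJ φ (kk x) (kk y) + φ (kk y) * φ (kk x) := by simp [dJ]
      _ = _ := by
          rw [hphik x, hphik y]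
          push_cast
          simp only [coe_dE]
          rw [add_mul, mul_add, mul_add, zVW y x, zWV y x]
          abel
    · refine (uniqVW hφ hred (hvV (x*y)) (hwW (x*y))
        ((Vphi φ).add_mem (eE_memV φ (kk x) (kk y))
          ((Vphi φ).mul_mem_left (vvf x) (vvf y) (hvV y)))
        ((Wphi φ).mul_mem_left (wwf x) (wwf y) (hwW y)) ?_).2
      calc (vvf (x * y) : R') + (wwf (x * y) : R') = φ (kk (x * y)) := (hphik (x * y)).symm
      _ = φ (kk x * kk y) := by rw [(hkmul x y).1]
      _ = eJ φ (kk x) (kk y) + φ (kk x) * φ (kk y) := by simp [eJ]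
      _ = _ := by
          rw [hphik x, hphik y]
          push_cast
          simp only [coe_eE]
          rw [add_mul, mul_add, mul_add, zVW x y, zWV x y]
          abel
  have hccmul : ∀ x y : R, φ (ccf x * ccf y) = φ (ccf x) * φ (ccf y) := by
    intro x y
    have h := (eJ_CC hφ hdisj hred (hcC x) (hcC y)).1
    rw [show eJ φ (ccf x) (ccf y) = φ (ccf x * ccf y) - φ (ccf x) * φ (ccf y) from rfl] at h
    exact sub_eq_zero.mp h
  have hφx : ∀ x : R, φ x = ((vvf x : R') + (wwf x : R')) + φ (ccf x) := by
    intro x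
    conv_lhs => rw [hxeq x]
    rw [hφ.1, hphik x]
  refine ⟨fun x => wwf x + PhiG φ (ccf x), vvf, ?_, ?_, ?_, ?_, ?_, ?_, ?_, ?_⟩
  · -- additivity of φ₁
    intro u _ v _
    apply Subtype.ext
    show ((wwf (u + v) + PhiG φ (ccf (u + v)) : rngGen φ) : R') = _
    rw [(hvwadd u v).2, (hkadd u v).2]
    push_cast
    simp only [coe_PhiG]
    rw [hφ.1]
    abel
  · -- additivity of φ₂
    intro u _ v _
    exact (hvwadd u v).1
  · -- multiplicativity of φ₁
    intro u _ v _
    apply Subtype.ext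
    show ((wwf (u * v) + PhiG φ (ccf (u * v)) : rngGen φ) : R') = _
    rw [(hvwmul u v).2, (hkmul u v).2]
    push_cast
    simp only [coe_PhiG]
    rw [hccmul u v]
    simp only [mul_add, add_mul]
    rw [zWC u v, zCW u v]
    abel
  · -- antimultiplicativity of φ₂
    intro u _ v _
    exact (hvwmul u v).1
  · -- φ = φ₁ + φ₂
    intro u _
    rw [hφx u]
    push_cast
    simp only [coe_PhiG]
    abel
  · -- the ideals J₁ and J₂
    refine ⟨annIdeal hred {t : R' | ∃ v : rngGen φ, v ∈ Vphi φ ∧ t = (v : R')}, Vphi φ,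
      ?_, fun u _ => hvV u, ?_⟩
    · intro u _
      rw [mem_annIdeal_iff]
      rintro t ⟨v', hv', rfl⟩
      constructor
      · push_cast
        simp only [coe_PhiG]
        rw [add_mul, (VW_zero hφ hred v' hv' (wwf u) (hwW u)).2,
          (CV_ann hφ hsumc hdisj hred (hcC u) v' hv').2]
        simp
      · push_cast
        simp only [coe_PhiG]
        rw [mul_add, (VW_zero hφ hred v' hv' (wwf u) (hwW u)).1,
          (CV_ann hφ hsumc hdisj hred (hcC u) v' hv').1]
        simp
    · ext a
      rw [TwoSidedIdeal.mem_inf, TwoSidedIdeal.mem_bot]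
      constructor
      · rintro ⟨h1, h2⟩
        have h3 := (mem_annIdeal_iff hred _ a).mp h1 (a : R') ⟨a, h2, rfl⟩
        exact Subtype.ext (hred _ h3.1)
      · rintro rfl
        exact ⟨zero_mem _, zero_mem _⟩
  · -- module conditions for φ₁
    intro u _ x
    constructor
    · show ((wwf (u * x) + PhiG φ (ccf (u * x)) : rngGen φ) : R') = _
      rw [(hvwmul u x).2, (hkmul u x).2]
      push_cast
      simp only [coe_PhiG]
      rw [hccmul u x, hφx x]
      simp only [mul_add, add_mul]
      rw [zWV u x, zWC u x, zCV u x, zCW u x]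
      abel
    · show ((wwf (x * u) + PhiG φ (ccf (x * u)) : rngGen φ) : R') = _
      rw [(hvwmul x u).2, (hkmul x u).2]
      push_cast
      simp only [coe_PhiG]
      rw [hccmul x u, hφx x]
      simp only [mul_add, add_mul]
      rw [zVW x u, zVC x u, zWC x u, zCW x u]
      abel
  · -- module conditions for φ₂
    intro u _ x
    constructor
    · show ((vvf (u * x) : rngGen φ) : R') = _
      rw [(hvwmul u x).1]
      push_cast
      rw [hφx x]
      simp only [add_mul]
      rw [zWV x u, zCV x u]
      abel
    · show ((vvf (x * u) : rngGen φ) : R') = _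
      rw [(hvwmul x u).1]
      push_cast
      rw [hφx x]
      simp only [mul_add]
      rw [zVW u x, zVC u x]
      abel
end

section
/- Let φ : R → R' be a Jordan homomorphism, K the commutator ideal of R, and K' the commutator ideal of R'. Suppose φ₁, φ₂ : K → R'_φ are additive maps, with φ₁ multiplicative and φ₂ antimultiplicative, witnessing that φ is the sum of a homomorphism and an antihomomorphism on K (i.e., satisfying conditions (a)–(d) of that definition). Then φ₁(K²) ⊆ K' and φ₂(K²) ⊆ K', where K² denotes the ideal of products. -/
/-!
If `ψ` is additive on the commutator ideal `K` and satisfies `ψ(ux) = ψ(u)φ(x)` and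
`ψ(xu) = φ(x)ψ(u)` there, then `ψ(a[x,y]) = ψ(a)[φ(x),φ(y)] ∈ K'` for `a ∈ K`. The `u ∈ K`
with `ψ(u) ∈ K'` form an ideal, and since `K` is generated by commutators, the products
`a[x,y]` generate `K²` as an ideal; hence `ψ(K²) ⊆ K'`. This applies to `φ₁` directly, and to
`φ₂` viewed as a map into `R'ᵐᵒᵖ`, where it becomes homomorphic.
-/

section AdditiveOn

variable {M N S : Type*} [AddGroup M] [AddGroup N] [SetLike S M] [AddSubgroupClass S M]
  {I : S} {ψ : M → N}

def AddMonoidHom.ofMapAddOn (hadd : ∀ u ∈ I, ∀ v ∈ I, ψ (u + v) = ψ u + ψ v) :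
    I →+ N :=
  AddMonoidHom.mk' (fun u => ψ u) fun u v => hadd u u.2 v v.2

theorem map_zero_of_map_add_on (hadd : ∀ u ∈ I, ∀ v ∈ I, ψ (u + v) = ψ u + ψ v) :
    ψ 0 = 0 :=
  map_zero (AddMonoidHom.ofMapAddOn hadd)

theorem map_neg_of_map_add_on (hadd : ∀ u ∈ I, ∀ v ∈ I, ψ (u + v) = ψ u + ψ v) {u : M}
    (hu : u ∈ I) : ψ (-u) = -ψ u :=
  map_neg (AddMonoidHom.ofMapAddOn hadd) ⟨u, hu⟩

theorem map_sub_of_map_add_on (hadd : ∀ u ∈ I, ∀ v ∈ I, ψ (u + v) = ψ u + ψ v) {u v : M}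
    (hu : u ∈ I) (hv : v ∈ I) : ψ (u - v) = ψ u - ψ v :=
  map_sub (AddMonoidHom.ofMapAddOn hadd) ⟨u, hu⟩ ⟨v, hv⟩

end AdditiveOn

namespace TwoSidedIdeal

variable {R : Type*} [NonUnitalRing R]

def leftColon (S I : TwoSidedIdeal R) : TwoSidedIdeal R :=
  mk' {v | ∀ a ∈ I, a * v ∈ S}
    (fun a _ => by simpa only [mul_zero] using S.zero_mem)
    (fun hv hw a ha => by simpa only [mul_add] using S.add_mem (hv a ha) (hw a ha))
    (fun hv a ha => by simpa only [mul_neg] using S.neg_mem (hv a ha))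
    (fun {x v} hv a ha => by simpa only [mul_assoc] using hv (a * x) (I.mul_mem_right a x ha))
    (fun {v x} hv a ha => by simpa only [mul_assoc] using S.mul_mem_right _ x (hv a ha))

theorem mem_leftColon {S I : TwoSidedIdeal R} {v : R} :
    v ∈ S.leftColon I ↔ ∀ a ∈ I, a * v ∈ S :=
  mem_mk' ..

theorem span_mul_commutatorIdeal_le {S : TwoSidedIdeal R}
    (h : ∀ a ∈ commutatorIdeal R, ∀ x y : R, a * (x * y - y * x) ∈ S) :
    span {z : R | ∃ a ∈ commutatorIdeal R, ∃ b ∈ commutatorIdeal R, z = a * b} ≤ S := by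
  have hK : commutatorIdeal R ≤ S.leftColon (commutatorIdeal R) := by
    refine span_le.2 ?_
    rintro _ ⟨x, y, rfl⟩
    exact mem_leftColon.2 fun a ha => h a ha x y
  refine span_le.2 ?_
  rintro _ ⟨a, ha, b, hb, rfl⟩
  exact mem_leftColon.1 (hK hb) a ha

end TwoSidedIdeal

theorem mul_sub_mul_mem_commutatorIdeal {R : Type*} [NonUnitalRing R] (x y : R) :
    x * y - y * x ∈ commutatorIdeal R :=
  TwoSidedIdeal.subset_span ⟨x, y, rfl⟩

section BimoduleMap

variable {R A : Type*} [NonUnitalRing R] [NonUnitalRing A] {φ ψ : R → A}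

def TwoSidedIdeal.comapOn (I : TwoSidedIdeal R) (J : TwoSidedIdeal A)
    (hadd : ∀ u ∈ I, ∀ v ∈ I, ψ (u + v) = ψ u + ψ v)
    (hmul : ∀ u ∈ I, ∀ x : R, ψ (u * x) = ψ u * φ x ∧ ψ (x * u) = φ x * ψ u) :
    TwoSidedIdeal R :=
  .mk' {u | u ∈ I ∧ ψ u ∈ J}
    ⟨I.zero_mem, by simpa only [map_zero_of_map_add_on hadd] using J.zero_mem⟩
    (fun ⟨hu, hu'⟩ ⟨hv, hv'⟩ =>
      ⟨I.add_mem hu hv, by simpa only [hadd _ hu _ hv] using J.add_mem hu' hv'⟩)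
    (fun ⟨hu, hu'⟩ =>
      ⟨I.neg_mem hu, by simpa only [map_neg_of_map_add_on hadd hu] using J.neg_mem hu'⟩)
    (fun {x u} ⟨hu, hu'⟩ =>
      ⟨I.mul_mem_left x u hu, by simpa only [(hmul u hu x).2] using J.mul_mem_left _ _ hu'⟩)
    (fun {u x} ⟨hu, hu'⟩ =>
      ⟨I.mul_mem_right u x hu, by simpa only [(hmul u hu x).1] using J.mul_mem_right _ _ hu'⟩)

theorem TwoSidedIdeal.mem_comapOn {I : TwoSidedIdeal R} {J : TwoSidedIdeal A}
    {hadd : ∀ u ∈ I, ∀ v ∈ I, ψ (u + v) = ψ u + ψ v}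
    {hmul : ∀ u ∈ I, ∀ x : R, ψ (u * x) = ψ u * φ x ∧ ψ (x * u) = φ x * ψ u} {u : R} :
    u ∈ I.comapOn J hadd hmul ↔ u ∈ I ∧ ψ u ∈ J :=
  TwoSidedIdeal.mem_mk' ..

theorem apply_mul_commutator_eq {I : TwoSidedIdeal R}
    (hadd : ∀ u ∈ I, ∀ v ∈ I, ψ (u + v) = ψ u + ψ v)
    (hmul : ∀ u ∈ I, ∀ x : R, ψ (u * x) = ψ u * φ x ∧ ψ (x * u) = φ x * ψ u)
    {a : R} (ha : a ∈ I) (x y : R) :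
    ψ (a * (x * y - y * x)) = ψ a * (φ x * φ y - φ y * φ x) := by
  have hax := I.mul_mem_right a x ha
  have hay := I.mul_mem_right a y ha
  rw [mul_sub, ← mul_assoc, ← mul_assoc, map_sub_of_map_add_on hadd (I.mul_mem_right _ y hax)
    (I.mul_mem_right _ x hay), (hmul _ hax y).1, (hmul a ha x).1, (hmul _ hay x).1,
    (hmul a ha y).1, mul_sub, mul_assoc, mul_assoc]

theorem apply_mem_of_mem_span_mul_commutatorIdeal {J : TwoSidedIdeal A}
    (hJ : ∀ x y : A, x * y - y * x ∈ J)
    (hadd : ∀ u ∈ commutatorIdeal R, ∀ v ∈ commutatorIdeal R, ψ (u + v) = ψ u + ψ v)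
    (hmul : ∀ u ∈ commutatorIdeal R, ∀ x : R,
      ψ (u * x) = ψ u * φ x ∧ ψ (x * u) = φ x * ψ u)
    {u : R} (hu : u ∈ TwoSidedIdeal.span
      {z : R | ∃ a ∈ commutatorIdeal R, ∃ b ∈ commutatorIdeal R, z = a * b}) :
    ψ u ∈ J := by
  refine (TwoSidedIdeal.mem_comapOn.1 (TwoSidedIdeal.span_mul_commutatorIdeal_le
    (S := (commutatorIdeal R).comapOn J hadd hmul) (fun a ha x y => ?_) hu)).2
  refine TwoSidedIdeal.mem_comapOn.2 ⟨(commutatorIdeal R).mul_mem_right _ _ ha, ?_⟩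
  rw [apply_mul_commutator_eq hadd hmul ha]
  exact J.mul_mem_left _ _ (hJ _ _)

end BimoduleMap

theorem sum_on_commutatorIdeal_maps_sq_into_commutatorIdeal_general
    {R R' : Type*} [NonUnitalRing R] [NonUnitalRing R']
    (φ : R → R')
    (φ₁ φ₂ : R → rngGen φ)
    (hw : IsSumHomAntihomWith φ (commutatorIdeal R) φ₁ φ₂) :
    ∀ u ∈ TwoSidedIdeal.span
        {z : R | ∃ a ∈ commutatorIdeal R, ∃ b ∈ commutatorIdeal R, z = a * b},
      (φ₁ u : R') ∈ commutatorIdeal R' ∧ (φ₂ u : R') ∈ commutatorIdeal R' := by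
  obtain ⟨hadd₁, hadd₂, -, -, -, -, hmul₁, hmul₂⟩ := hw
  intro u hu
  constructor
  · exact apply_mem_of_mem_span_mul_commutatorIdeal (ψ := fun v => (φ₁ v : R'))
      mul_sub_mul_mem_commutatorIdeal
      (fun v hv w hw => congrArg Subtype.val (hadd₁ v hv w hw)) hmul₁ hu
  · refine TwoSidedIdeal.mem_op_iff.1 (apply_mem_of_mem_span_mul_commutatorIdeal
      (φ := fun x => MulOpposite.op (φ x)) (ψ := fun v => MulOpposite.op (φ₂ v : R'))
      (fun x y => TwoSidedIdeal.mem_op_iff.2 (mul_sub_mul_mem_commutatorIdeal y.unop x.unop))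
      (fun v hv w hw => ?_) (fun v hv x => ?_) hu)
    · exact congrArg (MulOpposite.op ∘ Subtype.val) (hadd₂ v hv w hw)
    · rw [(hmul₂ v hv x).1, (hmul₂ v hv x).2, MulOpposite.op_mul, MulOpposite.op_mul]
      exact ⟨rfl, rfl⟩

/-- If `φ₁, φ₂` witness that the Jordan homomorphism `φ` is the sum of a homomorphism
and an antihomomorphism on the commutator ideal `K` of `R`, then `φ₁(K²) ⊆ K'` and
`φ₂(K²) ⊆ K'`, where `K'` is the commutator ideal of `R'` and `K²` is the ideal
generated by products of elements of `K`. -/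
theorem sum_on_commutatorIdeal_maps_sq_into_commutatorIdeal
    {R R' : Type*} [NonUnitalRing R] [NonUnitalRing R']
    (φ : R → R') (hφ : IsJordanHom φ)
    (φ₁ φ₂ : R → rngGen φ)
    (hw : IsSumHomAntihomWith φ (commutatorIdeal R) φ₁ φ₂) :
    ∀ u ∈ TwoSidedIdeal.span
        {z : R | ∃ a ∈ commutatorIdeal R, ∃ b ∈ commutatorIdeal R, z = a * b},
      (φ₁ u : R') ∈ commutatorIdeal R' ∧ (φ₂ u : R') ∈ commutatorIdeal R' :=
  sum_on_commutatorIdeal_maps_sq_into_commutatorIdeal_general φ φ₁ φ₂ hw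
end

section
/- Let φ : R → R' be a Jordan homomorphism that is the sum of a homomorphism and an antihomomorphism on the commutator ideal K of R. Let L be the ideal of R generated by all [[x,y],z] (x, y, z ∈ R), and L' the ideal of R' generated by all [[x',y'],z'] (x', y', z' ∈ R'). Then φ(L) ⊆ L'; moreover, if φ is surjective, then φ(L) = L'. -/
/-- The ideal of `A` generated by all double commutators `[[x,y],z]`. -/
def doubleCommutatorIdeal (A : Type*) [NonUnitalRing A] : TwoSidedIdeal A :=
  TwoSidedIdeal.span
    {w : A | ∃ x y z : A, w = (x * y - y * x) * z - z * (x * y - y * x)}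

/-!
On the commutator ideal `K`, the decomposition `φ = φ₁ + φ₂` gives
`φ(g w) = φ(g) φ(w) - [φ₂ g, φ w]` for `g ∈ K`, and `φ₂ [u, z] = [φ z, φ₂ u]` for `u ∈ K`.
Linearizing `φ(xyx) = φx φy φx` gives `φ [[x, y], z] = [[φx, φy], φz]`, so for `g = [[x, y], z]`
  `φ(g w) = [[φx, φy], φz] φw - [[φz, φ₂ [x, y]], φw]`.
Because `r [u, c] = [u, r c] - [u, r] c`, the ideal generated by double commutators is additively
generated by the `g` and the `g w`, and both inclusions follow; for `L' ⊆ φ(L)` write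
`φ₂ [x, y] = φ s` by surjectivity, so that `φ(g) φ(w) = φ(g w + [[z, s], w])`.
-/

section DoubleCommutatorIdeal

variable {A : Type*} [NonUnitalRing A]

theorem mul_lie_eq_lie_mul_sub (r u c : A) : r * ⁅u, c⁆ = ⁅u, r * c⁆ - ⁅u, r⁆ * c := by
  simp only [Ring.lie_def]
  noncomm_ring

theorem lie_lie_mem_doubleCommutatorIdeal (a b c : A) : ⁅⁅a, b⁆, c⁆ ∈ doubleCommutatorIdeal A :=
  TwoSidedIdeal.subset_span ⟨a, b, c, rfl⟩

def doubleCommutatorGenerators (A : Type*) [NonUnitalRing A] : Set A :=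
  {w | ∃ a b c : A, w = ⁅⁅a, b⁆, c⁆} ∪ {w | ∃ a b c e : A, w = ⁅⁅a, b⁆, c⁆ * e}

theorem mul_mem_closure_doubleCommutatorGenerators_left (r : A) {y : A}
    (hy : y ∈ AddSubgroup.closure (doubleCommutatorGenerators A)) :
    r * y ∈ AddSubgroup.closure (doubleCommutatorGenerators A) := by
  induction hy using AddSubgroup.closure_induction with
  | mem t ht =>
    rcases ht with ⟨a, b, c, rfl⟩ | ⟨a, b, c, e, rfl⟩
    · rw [mul_lie_eq_lie_mul_sub]
      exact sub_mem (AddSubgroup.subset_closure (Or.inl ⟨a, b, r * c, rfl⟩))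
        (AddSubgroup.subset_closure (Or.inr ⟨a, b, r, c, rfl⟩))
    · rw [← mul_assoc, mul_lie_eq_lie_mul_sub, sub_mul, mul_assoc]
      exact sub_mem (AddSubgroup.subset_closure (Or.inr ⟨a, b, r * c, e, rfl⟩))
        (AddSubgroup.subset_closure (Or.inr ⟨a, b, r, c * e, rfl⟩))
  | zero => simpa only [mul_zero] using zero_mem _
  | add y z _ _ hy hz => simpa only [mul_add] using add_mem hy hz
  | neg y _ hy => simpa only [mul_neg] using neg_mem hy

theorem mul_mem_closure_doubleCommutatorGenerators_right {y : A} (r : A)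
    (hy : y ∈ AddSubgroup.closure (doubleCommutatorGenerators A)) :
    y * r ∈ AddSubgroup.closure (doubleCommutatorGenerators A) := by
  induction hy using AddSubgroup.closure_induction with
  | mem t ht =>
    rcases ht with ⟨a, b, c, rfl⟩ | ⟨a, b, c, e, rfl⟩
    · exact AddSubgroup.subset_closure (Or.inr ⟨a, b, c, r, rfl⟩)
    · rw [mul_assoc]
      exact AddSubgroup.subset_closure (Or.inr ⟨a, b, c, e * r, rfl⟩)
  | zero => simpa only [zero_mul] using zero_mem _
  | add y z _ _ hy hz => simpa only [add_mul] using add_mem hy hz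
  | neg y _ hy => simpa only [neg_mul] using neg_mem hy

theorem doubleCommutatorIdeal_subset_closure :
    (doubleCommutatorIdeal A : Set A) ⊆ AddSubgroup.closure (doubleCommutatorGenerators A) := by
  let Q := AddSubgroup.closure (doubleCommutatorGenerators A)
  let J : TwoSidedIdeal A := .mk' Q Q.zero_mem Q.add_mem Q.neg_mem
    (mul_mem_closure_doubleCommutatorGenerators_left _)
    (mul_mem_closure_doubleCommutatorGenerators_right _)
  have hLJ : doubleCommutatorIdeal A ≤ J := TwoSidedIdeal.span_le.mpr fun w hw ↦ by
    simpa only [J, SetLike.mem_coe, TwoSidedIdeal.mem_mk'] using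
      AddSubgroup.subset_closure (show w ∈ doubleCommutatorGenerators A from Or.inl hw)
  intro x hx
  simpa only [J, SetLike.mem_coe, TwoSidedIdeal.mem_mk'] using hLJ hx

@[elab_as_elim]
theorem doubleCommutatorIdeal_induction {p : A → Prop} (zero : p 0)
    (add : ∀ x y, p x → p y → p (x + y)) (neg : ∀ x, p x → p (-x))
    (lie_lie : ∀ a b c : A, p ⁅⁅a, b⁆, c⁆) (lie_lie_mul : ∀ a b c e : A, p (⁅⁅a, b⁆, c⁆ * e))
    {x : A} (hx : x ∈ doubleCommutatorIdeal A) : p x := by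
  have hxQ := doubleCommutatorIdeal_subset_closure hx
  clear hx
  induction hxQ using AddSubgroup.closure_induction with
  | mem t ht =>
    rcases ht with ⟨a, b, c, rfl⟩ | ⟨a, b, c, e, rfl⟩
    exacts [lie_lie a b c, lie_lie_mul a b c e]
  | zero => exact zero
  | add y z _ _ hy hz => exact add y z hy hz
  | neg y _ hy => exact neg y hy

end DoubleCommutatorIdeal

theorem lie_mem_commutatorIdeal {A : Type*} [NonUnitalRing A] (x y : A) :
    ⁅x, y⁆ ∈ commutatorIdeal A :=
  TwoSidedIdeal.subset_span ⟨x, y, rfl⟩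

namespace IsJordanHom

variable {R R' : Type*} [NonUnitalRing R] [NonUnitalRing R'] {φ : R → R'}

theorem map_add (hφ : IsJordanHom φ) (a b : R) : φ (a + b) = φ a + φ b :=
  hφ.1 a b

theorem map_zero (hφ : IsJordanHom φ) : φ 0 = 0 :=
  (AddMonoidHom.mk' φ hφ.1).map_zero

theorem map_neg (hφ : IsJordanHom φ) (a : R) : φ (-a) = -φ a :=
  (AddMonoidHom.mk' φ hφ.1).map_neg a

theorem map_sub (hφ : IsJordanHom φ) (a b : R) : φ (a - b) = φ a - φ b :=
  (AddMonoidHom.mk' φ hφ.1).map_sub a b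

/-- Linearization of `φ(xyx) = φ(x)φ(y)φ(x)` at `x = a + c`. -/
theorem map_mul_mul_add_mul_mul (hφ : IsJordanHom φ) (a b c : R) :
    φ (a * b * c + c * b * a) = φ a * φ b * φ c + φ c * φ b * φ a := by
  have h := hφ.2.2 (a + c) b
  rw [show (a + c) * b * (a + c) = a * b * a + (a * b * c + c * b * a) + c * b * c by
    noncomm_ring, hφ.map_add (a * b * a + _), hφ.map_add (a * b * a), hφ.map_add a c,
    hφ.2.2, hφ.2.2] at h
  rw [show (φ a + φ c) * φ b * (φ a + φ c)
      = φ a * φ b * φ a + (φ a * φ b * φ c + φ c * φ b * φ a) + φ c * φ b * φ c by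
    noncomm_ring] at h
  exact add_left_cancel (add_right_cancel h)

theorem map_lie_lie (hφ : IsJordanHom φ) (x y z : R) :
    φ ⁅⁅x, y⁆, z⁆ = ⁅⁅φ x, φ y⁆, φ z⁆ := by
  rw [show ⁅⁅x, y⁆, z⁆ = (x * y * z + z * y * x) - (y * x * z + z * x * y) by
    simp only [Ring.lie_def]; noncomm_ring, hφ.map_sub, hφ.map_mul_mul_add_mul_mul,
    hφ.map_mul_mul_add_mul_mul]
  simp only [Ring.lie_def]
  noncomm_ring

end IsJordanHom

namespace IsSumHomAntihomWith

variable {R R' : Type*} [NonUnitalRing R] [NonUnitalRing R'] {φ : R → R'}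
  {I : TwoSidedIdeal R} {φ₁ φ₂ : R → rngGen φ}

theorem map_sub₂ (h : IsSumHomAntihomWith φ I φ₁ φ₂) {u v : R} (hu : u ∈ I) (hv : v ∈ I) :
    (φ₂ (u - v) : R') = φ₂ u - φ₂ v := by
  obtain ⟨-, hadd₂, -⟩ := h
  have hadd := congrArg Subtype.val (hadd₂ (u - v) (I.sub_mem hu hv) v hv)
  rw [sub_add_cancel] at hadd
  exact eq_sub_of_add_eq hadd.symm

theorem map₂_lie (h : IsSumHomAntihomWith φ I φ₁ φ₂) {u : R} (hu : u ∈ I) (z : R) :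
    (φ₂ ⁅u, z⁆ : R') = ⁅φ z, (φ₂ u : R')⁆ := by
  rw [Ring.lie_def, h.map_sub₂ (I.mul_mem_right _ _ hu) (I.mul_mem_left _ _ hu)]
  obtain ⟨-, -, -, -, -, -, -, hmul₂⟩ := h
  rw [(hmul₂ u hu z).1, (hmul₂ u hu z).2]
  rfl

theorem map_mul_right (h : IsSumHomAntihomWith φ I φ₁ φ₂) {g : R} (hg : g ∈ I) (w : R) :
    φ (g * w) = φ g * φ w - ⁅(φ₂ g : R'), φ w⁆ := by
  obtain ⟨-, -, -, -, hsum, -, hmul₁, hmul₂⟩ := h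
  rw [hsum _ (I.mul_mem_right _ _ hg), hsum _ hg, (hmul₁ g hg w).1, (hmul₂ g hg w).1,
    Ring.lie_def]
  noncomm_ring

theorem map_lie_mul (h : IsSumHomAntihomWith φ I φ₁ φ₂) {u : R} (hu : u ∈ I) (z w : R) :
    φ (⁅u, z⁆ * w) = φ ⁅u, z⁆ * φ w - ⁅⁅φ z, (φ₂ u : R')⁆, φ w⁆ := by
  have hlie : ⁅u, z⁆ ∈ I := I.sub_mem (I.mul_mem_right _ _ hu) (I.mul_mem_left _ _ hu)
  rw [h.map_mul_right hlie, h.map₂_lie hu]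

end IsSumHomAntihomWith

section DoubleCommutators

variable {R R' : Type*} [NonUnitalRing R] [NonUnitalRing R'] {φ : R → R'}
  {φ₁ φ₂ : R → rngGen φ}

theorem IsJordanHom.map_lie_lie_mul (hφ : IsJordanHom φ)
    (h : IsSumHomAntihomWith φ (commutatorIdeal R) φ₁ φ₂) (x y z w : R) :
    φ (⁅⁅x, y⁆, z⁆ * w) = ⁅⁅φ x, φ y⁆, φ z⁆ * φ w - ⁅⁅φ z, (φ₂ ⁅x, y⁆ : R')⁆, φ w⁆ := by
  rw [h.map_lie_mul (lie_mem_commutatorIdeal x y), hφ.map_lie_lie]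

theorem IsJordanHom.map_mem_doubleCommutatorIdeal (hφ : IsJordanHom φ)
    (h : IsSumHomAntihomWith φ (commutatorIdeal R) φ₁ φ₂) {u : R}
    (hu : u ∈ doubleCommutatorIdeal R) : φ u ∈ doubleCommutatorIdeal R' := by
  refine doubleCommutatorIdeal_induction ?zero ?add ?neg ?lie_lie ?lie_lie_mul hu
  case zero => simpa only [hφ.map_zero] using TwoSidedIdeal.zero_mem _
  case add =>
    intro x y hx hy
    simpa only [hφ.map_add] using TwoSidedIdeal.add_mem _ hx hy
  case neg =>
    intro x hx
    simpa only [hφ.map_neg] using TwoSidedIdeal.neg_mem _ hx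
  case lie_lie =>
    intro a b c
    simpa only [hφ.map_lie_lie] using lie_lie_mem_doubleCommutatorIdeal _ _ _
  case lie_lie_mul =>
    intro a b c e
    rw [hφ.map_lie_lie_mul h]
    exact TwoSidedIdeal.sub_mem _
      (TwoSidedIdeal.mul_mem_right _ _ _ (lie_lie_mem_doubleCommutatorIdeal _ _ _))
      (lie_lie_mem_doubleCommutatorIdeal _ _ _)

theorem IsJordanHom.doubleCommutatorIdeal_subset_image (hφ : IsJordanHom φ)
    (h : IsSumHomAntihomWith φ (commutatorIdeal R) φ₁ φ₂) (hsurj : Function.Surjective φ) :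
    (doubleCommutatorIdeal R' : Set R') ⊆ φ '' (doubleCommutatorIdeal R : Set R) := by
  intro v hv
  refine doubleCommutatorIdeal_induction ?zero ?add ?neg ?lie_lie ?lie_lie_mul hv
  case zero => exact ⟨0, TwoSidedIdeal.zero_mem _, hφ.map_zero⟩
  case add =>
    rintro _ _ ⟨a, ha, rfl⟩ ⟨b, hb, rfl⟩
    exact ⟨a + b, TwoSidedIdeal.add_mem _ ha hb, hφ.map_add a b⟩
  case neg =>
    rintro _ ⟨a, ha, rfl⟩
    exact ⟨-a, TwoSidedIdeal.neg_mem _ ha, hφ.map_neg a⟩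
  case lie_lie =>
    intro a b c
    obtain ⟨x, rfl⟩ := hsurj a
    obtain ⟨y, rfl⟩ := hsurj b
    obtain ⟨z, rfl⟩ := hsurj c
    exact ⟨_, lie_lie_mem_doubleCommutatorIdeal x y z, hφ.map_lie_lie x y z⟩
  case lie_lie_mul =>
    intro a b c e
    obtain ⟨x, rfl⟩ := hsurj a
    obtain ⟨y, rfl⟩ := hsurj b
    obtain ⟨z, rfl⟩ := hsurj c
    obtain ⟨w, rfl⟩ := hsurj e
    obtain ⟨s, hs⟩ := hsurj (φ₂ ⁅x, y⁆)
    refine ⟨⁅⁅x, y⁆, z⁆ * w + ⁅⁅z, s⁆, w⁆, TwoSidedIdeal.add_mem _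
      (TwoSidedIdeal.mul_mem_right _ _ _ (lie_lie_mem_doubleCommutatorIdeal _ _ _))
      (lie_lie_mem_doubleCommutatorIdeal _ _ _), ?_⟩
    rw [hφ.map_add, hφ.map_lie_lie_mul h, hφ.map_lie_lie, hs]
    abel

end DoubleCommutators

/-- If a Jordan homomorphism `φ` is the sum of a homomorphism and an antihomomorphism
on the commutator ideal `K` of `R`, then `φ(L) ⊆ L'`, where `L` (resp. `L'`) is the
ideal of `R` (resp. `R'`) generated by all `[[x,y],z]`; moreover, if `φ` is
surjective then `φ(L) = L'`. -/
theorem jordanHom_maps_doubleCommutatorIdeal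
    {R R' : Type*} [NonUnitalRing R] [NonUnitalRing R']
    (φ : R → R') (hφ : IsJordanHom φ)
    (hsum : IsSumHomAntihomOn φ (commutatorIdeal R)) :
    (∀ u ∈ doubleCommutatorIdeal R, φ u ∈ doubleCommutatorIdeal R') ∧
    (Function.Surjective φ →
      φ '' (doubleCommutatorIdeal R : Set R) = (doubleCommutatorIdeal R' : Set R')) := by
  obtain ⟨φ₁, φ₂, h⟩ := hsum
  refine ⟨fun u hu ↦ hφ.map_mem_doubleCommutatorIdeal h hu, fun hsurj ↦ ?_⟩
  refine Set.Subset.antisymm ?_ (hφ.doubleCommutatorIdeal_subset_image h hsurj)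
  rintro _ ⟨u, hu, rfl⟩
  exact hφ.map_mem_doubleCommutatorIdeal h hu
end
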